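/- arXiv:1906.05124 — 4 statements merged into one kernel-verified Lean document; each statement's English description precedes it below -/
import Mathlib

section
/- Let G be a locally compact group and σ a non-degenerate probability measure on G. Then every σ-harmonic function in C₀(G) (continuous, vanishing at infinity) that is also bounded and σ-harmonic is constant; in particular if G is non-compact, every σ-harmonic function in C₀(G) is zero. -/
open MeasureTheory Filter Topology Pointwise
open scoped ENNReal

/-- The (closed) support of a Borel measure: points all of whose open neighbourhoods have
positive measure. -/
def msupport {G : Type*} [TopologicalSpace G] [MeasurableSpace G] (σ : Measure G) : Set G :=
  {x | ∀ U : Set G, IsOpen U → x ∈ U → σ U ≠ 0}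

section Aux

variable {G : Type*} [Group G] [TopologicalSpace G] [IsTopologicalGroup G]
    [MeasurableSpace G] [BorelSpace G]

/-- A continuous nonnegative function that vanishes a.e. vanishes on the measure support. -/
lemma aux_zero_on_msupport (σ : Measure G) (g : G → ℝ) (hg : Continuous g)
    (hge : ∀ y, 0 ≤ g y) (hae : g =ᵐ[σ] 0) : ∀ y ∈ msupport σ, g y = 0 := by
  intro y hy
  by_contra hne
  have hpos : 0 < g y := lt_of_le_of_ne (hge y) (Ne.symm hne)
  set U : Set G := g ⁻¹' (Set.Ioi (g y / 2)) with hU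
  have hUopen : IsOpen U := isOpen_Ioi.preimage hg
  have hyU : y ∈ U := by simp [hU]; linarith
  have hnull : σ {z | g z ≠ 0} = 0 := by
    simpa [Filter.EventuallyEq, ae_iff] using hae
  have hsub : U ⊆ {z | g z ≠ 0} := by
    intro z hz
    simp only [hU, Set.mem_preimage, Set.mem_Ioi] at hz
    have : 0 < g z := lt_of_lt_of_le (by linarith) (le_of_lt hz)
    exact ne_of_gt this
  exact hy U hUopen hyU (measure_mono_null hsub hnull)

lemma aux_integrable (σ : Measure G) [IsProbabilityMeasure σ] (f : G → ℂ)
    (hf : Continuous f) (M : ℝ) (hM : ∀ z, ‖f z‖ ≤ M) (x : G) :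
    Integrable (fun y => f (y⁻¹ * x)) σ := by
  have hc : Continuous fun y : G => f (y⁻¹ * x) :=
    hf.comp ((continuous_inv).mul continuous_const)
  refine Integrable.mono' (integrable_const M) hc.aestronglyMeasurable ?_
  exact Filter.Eventually.of_forall fun y => by simpa using hM (y⁻¹ * x)

/-- Key step: at a maximum point, harmonicity forces `f` constant along the support. -/
lemma aux_step (σ : Measure G) [IsProbabilityMeasure σ] (f : G → ℂ)
    (hf : Continuous f) (M : ℝ) (hMpos : 0 < M) (hM : ∀ z, ‖f z‖ ≤ M)
    (harm : ∀ x, ∫ y, f (y⁻¹ * x) ∂σ = f x)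
    (x₀ : G) (hx₀ : ‖f x₀‖ = M) :
    ∀ y ∈ msupport σ, f (y⁻¹ * x₀) = f x₀ := by
  set c : ℂ := (starRingEnd ℂ) (f x₀) with hc
  set g : G → ℝ := fun y => M ^ 2 - (c * f (y⁻¹ * x₀)).re with hg
  have hcont : Continuous g := by
    apply continuous_const.sub
    exact (Complex.continuous_re.comp
      (continuous_const.mul (hf.comp ((continuous_inv).mul continuous_const))))
  have habs : ∀ y : G, ‖c * f (y⁻¹ * x₀)‖ ≤ M ^ 2 := by
    intro y
    rw [norm_mul]
    calc ‖c‖ * ‖f (y⁻¹ * x₀)‖ ≤ M * M := by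
          apply mul_le_mul _ (hM _) (norm_nonneg _) (le_of_lt hMpos)
          simpa [hc, hx₀] using le_of_eq hx₀
      _ = M ^ 2 := (sq M).symm
  have hge : ∀ y, 0 ≤ g y := by
    intro y
    have := (Complex.re_le_norm (c * f (y⁻¹ * x₀))).trans (habs y)
    simp only [hg]; linarith
  have hint : Integrable (fun y => f (y⁻¹ * x₀)) σ := aux_integrable σ f hf M hM x₀
  have hint2 : Integrable (fun y => c * f (y⁻¹ * x₀)) σ := hint.const_mul c
  have hintegral : ∫ y, g y ∂σ = 0 := by
    have h1 : ∫ y, (c * f (y⁻¹ * x₀)).re ∂σ = (c * f x₀).re := by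
      have := integral_re (𝕜 := ℂ) hint2
      rw [integral_const_mul, harm x₀] at this
      simpa using this
    have h2 : (c * f x₀).re = M ^ 2 := by
      rw [hc, mul_comm, Complex.mul_conj, Complex.normSq_eq_norm_sq, hx₀]
      norm_cast
    have h3 : Integrable (fun y => (c * f (y⁻¹ * x₀)).re) σ :=
      hint2.re
    rw [hg]
    rw [integral_sub (integrable_const _) h3, integral_const, h1, h2]
    simp
  have hae : g =ᵐ[σ] 0 :=
    (integral_eq_zero_iff_of_nonneg hge ((integrable_const (M ^ 2)).sub hint2.re)).mp hintegral
  have hzero := aux_zero_on_msupport σ g hcont hge hae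
  intro y hy
  have hgy : g y = 0 := hzero y hy
  set z : ℂ := c * f (y⁻¹ * x₀) with hz
  have hre : z.re = M ^ 2 := by
    simp only [hg] at hgy; linarith
  have habsz : ‖z‖ ≤ M ^ 2 := habs y
  have him : z.im = 0 := by
    have h3 : ‖z‖ ≤ z.re := by rw [hre]; exact habsz
    have h4 : z.im ^ 2 ≤ 0 := by
      nlinarith [Complex.sq_norm z, Complex.normSq_apply z, Complex.re_le_norm z]
    have h5 : z.im ^ 2 = 0 := le_antisymm h4 (sq_nonneg _)
    exact pow_eq_zero_iff (two_ne_zero) |>.mp h5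
  have hzval : z = (M : ℂ) ^ 2 := by
    apply Complex.ext
    · rw [hre, ← Complex.ofReal_pow, Complex.ofReal_re]
    · rw [him, ← Complex.ofReal_pow, Complex.ofReal_im]
  -- now c * f (y⁻¹ * x₀) = M ^ 2 = c * f x₀
  have hcfx : c * f x₀ = (M : ℂ) ^ 2 := by
    rw [hc, mul_comm, Complex.mul_conj]
    rw [Complex.normSq_eq_norm_sq, hx₀]
    norm_cast
  have hcne : c ≠ 0 := by
    rw [hc]
    simp only [ne_eq, map_eq_zero]
    intro h
    rw [h] at hx₀
    simp at hx₀
    exact (ne_of_gt hMpos) hx₀.symm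
  have : c * f (y⁻¹ * x₀) = c * f x₀ := by rw [← hz, hzval, hcfx]
  exact mul_left_cancel₀ hcne this

end Aux

/-- Let `G` be a locally compact group and `σ` a non-degenerate probability
measure on `G`.  Then every bounded continuous `σ`-harmonic function vanishing at infinity is
constant; in particular if `G` is non-compact, every `σ`-harmonic function in `C₀(G)` is
zero. -/
theorem harmonic_C0_constant
    {G : Type*} [Group G] [TopologicalSpace G] [IsTopologicalGroup G]
    [LocallyCompactSpace G] [MeasurableSpace G] [BorelSpace G]
    (σ : Measure G) [IsProbabilityMeasure σ]
    (hnd : closure (⋃ n : ℕ, (msupport σ) ^ (n + 1)) = Set.univ) :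
    (∀ f : G → ℂ, Continuous f → Bornology.IsBounded (Set.range f) →
      Tendsto f (cocompact G) (nhds 0) →
      (∀ x, ∫ y, f (y⁻¹ * x) ∂σ = f x) →
      ∃ c : ℂ, ∀ x, f x = c) ∧
    (¬ CompactSpace G →
      ∀ f : G → ℂ, Continuous f → Tendsto f (cocompact G) (nhds 0) →
        (∀ x, ∫ y, f (y⁻¹ * x) ∂σ = f x) →
        ∀ x, f x = 0) := by
  -- main argument, without the boundedness hypothesis
  have main : ∀ f : G → ℂ, Continuous f → Tendsto f (cocompact G) (nhds 0) →
      (∀ x, ∫ y, f (y⁻¹ * x) ∂σ = f x) → ∃ c : ℂ, ∀ x, f x = c := by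
    intro f hf htend harm
    by_cases hzero : ∀ x, f x = 0
    · exact ⟨0, hzero⟩
    push_neg at hzero
    obtain ⟨x₁, hx₁⟩ := hzero
    have hε : (0 : ℝ) < ‖f x₁‖ := by
      simpa using hx₁
    -- get a compact set outside of which |f| < |f x₁|
    have hmem : f ⁻¹' (Metric.ball 0 (‖f x₁‖)) ∈ cocompact G :=
      htend (Metric.ball_mem_nhds 0 hε)
    obtain ⟨K, hKc, hKsub⟩ := Filter.mem_cocompact.mp hmem
    have hx₁K : x₁ ∈ K := by
      by_contra h
      have := hKsub h
      simp only [Set.mem_preimage, Metric.mem_ball, dist_zero_right] at this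
      exact lt_irrefl _ this
    obtain ⟨x₀, hx₀K, hmax⟩ := hKc.exists_isMaxOn ⟨x₁, hx₁K⟩
      ((continuous_norm.comp hf).continuousOn)
    set M : ℝ := ‖f x₀‖ with hMdef
    have hM : ∀ z, ‖f z‖ ≤ M := by
      intro z
      by_cases hz : z ∈ K
      · exact hmax hz
      · have := hKsub hz
        simp only [Set.mem_preimage, Metric.mem_ball, dist_zero_right] at this
        exact le_of_lt (lt_of_lt_of_le this (hmax hx₁K))
    have hMpos : 0 < M := lt_of_lt_of_le hε (hmax hx₁K)
    -- by induction, f (y⁻¹ * x₀) = f x₀ for all y in powers of the support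
    have hiter : ∀ n : ℕ, ∀ y ∈ (msupport σ) ^ (n + 1), f (y⁻¹ * x₀) = f x₀ := by
      intro n
      induction n with
      | zero =>
        intro y hy
        rw [pow_one] at hy
        exact aux_step σ f hf M hMpos hM harm x₀ rfl y hy
      | succ n ih =>
        intro y hy
        rw [pow_succ] at hy
        obtain ⟨a, ha, b, hb, rfl⟩ := hy
        have h1 : f (a⁻¹ * x₀) = f x₀ := ih a ha
        have h2 : ‖f (a⁻¹ * x₀)‖ = M := by rw [h1]
        have := aux_step σ f hf M hMpos hM harm (a⁻¹ * x₀) h2 b hb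
        rw [h1] at this
        rw [← this]
        congr 1
        group
    -- the set where f (y⁻¹ * x₀) = f x₀ is closed and contains all powers, hence is univ
    have hclosed : IsClosed {y : G | f (y⁻¹ * x₀) = f x₀} := by
      have : {y : G | f (y⁻¹ * x₀) = f x₀} =
          (fun y : G => f (y⁻¹ * x₀) - f x₀) ⁻¹' {0} := by
        ext y; simp [sub_eq_zero]
      rw [this]
      exact IsClosed.preimage
        (((hf.comp ((continuous_inv).mul continuous_const)).sub continuous_const))
        isClosed_singleton
    have hall : ∀ y : G, f (y⁻¹ * x₀) = f x₀ := by
      intro y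
      have hsub : (⋃ n : ℕ, (msupport σ) ^ (n + 1)) ⊆ {y : G | f (y⁻¹ * x₀) = f x₀} := by
        intro z hz
        obtain ⟨n, hn⟩ := Set.mem_iUnion.mp hz
        exact hiter n z hn
      have : Set.univ ⊆ {y : G | f (y⁻¹ * x₀) = f x₀} := by
        rw [← hnd]
        exact hclosed.closure_subset_iff.mpr hsub
      exact this (Set.mem_univ y)
    refine ⟨f x₀, fun x => ?_⟩
    have := hall (x₀ * x⁻¹)
    simpa [mul_assoc] using this
  constructor
  · intro f hf _ htend harm
    exact main f hf htend harm
  · intro hnc f hf htend harm x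
    obtain ⟨c, hc⟩ := main f hf htend harm
    have hne : (cocompact G).NeBot :=
      Filter.cocompact_neBot_iff.mpr (not_compactSpace_iff.mp hnc)
    have h1 : Tendsto f (cocompact G) (nhds c) := by
      have : f = fun _ => c := funext hc
      rw [this]
      exact tendsto_const_nhds
    have := tendsto_nhds_unique htend h1
    rw [hc x, ← this]
end

section
/- Let G be a compact group and σ an adapted probability measure on G (the closed subgroup generated by supp σ is G). Then for every 1 ≤ p ≤ ∞, H_σ^p(G) = ℂ·1: every σ-harmonic L^p-function is constant almost everywhere. -/
open MeasureTheory Filter Topology Pointwise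
open scoped ENNReal Uniformity

/-! ### The strictly convex weight function `φ z = √(1 + ‖z‖²)` -/

noncomputable def phiC (z : ℂ) : ℝ := Real.sqrt (1 + ‖z‖ ^ 2)

lemma phiC_nonneg (z : ℂ) : 0 ≤ phiC z := Real.sqrt_nonneg _

lemma phiC_le (z : ℂ) : phiC z ≤ 1 + ‖z‖ := by
  have h1 : 1 + ‖z‖ ^ 2 ≤ (1 + ‖z‖) ^ 2 := by nlinarith [norm_nonneg z]
  have := Real.sqrt_le_sqrt h1
  rwa [Real.sqrt_sq (by positivity)] at this

lemma phiC_continuous : Continuous phiC :=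
  Real.continuous_sqrt.comp (continuous_const.add (continuous_norm.pow 2))

private noncomputable def iotaC (z : ℂ) : EuclideanSpace ℝ (Fin 3) := WithLp.toLp 2 ![1, z.re, z.im]

lemma phiC_eq_norm (z : ℂ) : phiC z = ‖iotaC z‖ := by
  rw [EuclideanSpace.norm_eq]
  unfold phiC
  congr 1
  rw [Fin.sum_univ_three]
  simp only [iotaC, Matrix.cons_val_zero, Matrix.cons_val_one, Matrix.head_cons,
    Matrix.cons_val_two, Matrix.tail_cons, Real.norm_eq_abs, sq_abs,
    Complex.sq_norm, Complex.normSq_apply]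
  ring

private lemma iotaC_apply0 (z : ℂ) : iotaC z 0 = 1 := rfl
private lemma iotaC_apply1 (z : ℂ) : iotaC z 1 = z.re := rfl
private lemma iotaC_apply2 (z : ℂ) : iotaC z 2 = z.im := rfl

private lemma euclid_add_apply (u v : EuclideanSpace ℝ (Fin 3)) (i : Fin 3) :
    (u + v) i = u i + v i := rfl

private lemma euclid_smul_apply (c : ℝ) (u : EuclideanSpace ℝ (Fin 3)) (i : Fin 3) :
    (c • u) i = c * u i := rfl

lemma phiC_strictConvexOn : StrictConvexOn ℝ Set.univ phiC := by
  refine ⟨convex_univ, ?_⟩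
  intro x _ y _ hxy a b ha hb hab
  have hre : (a • x + b • y).re = a * x.re + b * y.re := by
    simp [Complex.real_smul]
  have him : (a • x + b • y).im = a * x.im + b * y.im := by
    simp [Complex.real_smul]
  have key : iotaC (a • x + b • y) = a • iotaC x + b • iotaC y := by
    apply PiLp.ext; intro i
    rw [euclid_add_apply, euclid_smul_apply, euclid_smul_apply]
    match i with
    | 0 => rw [iotaC_apply0, iotaC_apply0, iotaC_apply0]; rw [mul_one, mul_one]; exact hab.symm
    | 1 => rw [iotaC_apply1, iotaC_apply1, iotaC_apply1]; exact hre
    | 2 => rw [iotaC_apply2, iotaC_apply2, iotaC_apply2]; exact him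
  have hzero : ∀ (c : ℝ) (z : ℂ), 0 < c → c • iotaC z ≠ 0 := by
    intro c z hc h
    have h0 := congr_arg (fun v => v 0) h
    rw [euclid_smul_apply, iotaC_apply0, mul_one] at h0
    exact hc.ne' h0
  have hray : ¬ SameRay ℝ (a • iotaC x) (b • iotaC y) := by
    rintro (h | h | ⟨r₁, r₂, hr₁, hr₂, hr⟩)
    · exact hzero a x ha h
    · exact hzero b y hb h
    · have h0 := congr_arg (fun v => v 0) hr
      have h1 := congr_arg (fun v => v 1) hr
      have h2 := congr_arg (fun v => v 2) hr
      rw [euclid_smul_apply, euclid_smul_apply, euclid_smul_apply, euclid_smul_apply,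
        iotaC_apply0, iotaC_apply0, mul_one, mul_one] at h0
      rw [euclid_smul_apply, euclid_smul_apply, euclid_smul_apply, euclid_smul_apply,
        iotaC_apply1, iotaC_apply1] at h1
      rw [euclid_smul_apply, euclid_smul_apply, euclid_smul_apply, euclid_smul_apply,
        iotaC_apply2, iotaC_apply2] at h2
      have hpos : (0:ℝ) < r₁ * a := by positivity
      apply hxy
      have hre' : x.re = y.re := by
        apply mul_left_cancel₀ hpos.ne'
        calc r₁ * a * x.re = r₁ * (a * x.re) := by ring
          _ = r₂ * (b * y.re) := h1
          _ = r₂ * b * y.re := by ring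
          _ = r₁ * a * y.re := by rw [← h0]
      have him' : x.im = y.im := by
        apply mul_left_cancel₀ hpos.ne'
        calc r₁ * a * x.im = r₁ * (a * x.im) := by ring
          _ = r₂ * (b * y.im) := h2
          _ = r₂ * b * y.im := by ring
          _ = r₁ * a * y.im := by rw [← h0]
      exact Complex.ext hre' him'
  have hcalc : phiC (a • x + b • y) < a * phiC x + b * phiC y := by
    rw [phiC_eq_norm, phiC_eq_norm, phiC_eq_norm, key]
    calc ‖a • iotaC x + b • iotaC y‖ < ‖a • iotaC x‖ + ‖b • iotaC y‖ :=
        norm_add_lt_of_not_sameRay hray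
      _ = a * ‖iotaC x‖ + b * ‖iotaC y‖ := by
        rw [norm_smul, norm_smul, Real.norm_eq_abs, Real.norm_eq_abs,
          abs_of_pos ha, abs_of_pos hb]
  simpa [smul_eq_mul] using hcalc

/-! ### Uniform continuity on a compact group -/

lemma unif_pairs {G : Type*} [Group G] [TopologicalSpace G] [IsTopologicalGroup G]
    [CompactSpace G] (c : G → ℂ) (hc : Continuous c) {ε : ℝ} (hε : 0 < ε) :
    ∃ V ∈ 𝓝 (1 : G), ∀ p q : G, q * p⁻¹ ∈ V → ‖c q - c p‖ ≤ ε := by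
  letI : UniformSpace G := IsTopologicalGroup.rightUniformSpace G
  haveI : IsUniformGroup G := IsUniformGroup.of_compactSpace
  have huc : UniformContinuous c := CompactSpace.uniformContinuous_of_continuous hc
  have hent : {q : ℂ × ℂ | dist q.1 q.2 < ε} ∈ 𝓤 ℂ := Metric.dist_mem_uniformity hε
  have hpre := huc hent
  rw [uniformity_eq_comap_nhds_one' G] at hpre
  rcases hpre with ⟨V, hV, hsub⟩
  refine ⟨V, hV, ?_⟩
  intro p q hpq
  have hmem : ((p, q) : G × G) ∈ (fun r : G × G => r.2 * r.1⁻¹) ⁻¹' V := by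
    simpa [div_eq_mul_inv] using hpq
  have := hsub hmem
  simp only [Set.mem_preimage, Set.mem_setOf_eq] at this
  rw [← dist_eq_norm]
  exact (by rwa [dist_comm] at this : dist (c q) (c p) < ε).le

/-! ### Product measurability of continuous kernels -/

section ProdSM

variable {G : Type*} [Group G] [TopologicalSpace G] [IsTopologicalGroup G]
    [CompactSpace G] [MeasurableSpace G] [BorelSpace G]

open Classical in
private noncomputable def pickAux (U : G → Set G) : List G → G → G
  | [], _ => 1
  | g :: rest, y => if y ∈ U g then g else pickAux U rest y

open Classical in
private lemma pickAux_spec (U : G → Set G) :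
    ∀ (l : List G) (y : G), y ∈ ⋃ g ∈ l, U g → y ∈ U (pickAux U l y) := by
  intro l
  induction l with
  | nil => intro y hy; simp at hy
  | cons g rest ih =>
      intro y hy
      by_cases hyg : y ∈ U g
      · show y ∈ U (if y ∈ U g then g else pickAux U rest y)
        rw [if_pos hyg]; exact hyg
      · show y ∈ U (if y ∈ U g then g else pickAux U rest y)
        rw [if_neg hyg]
        apply ih
        have hy' : y ∈ U g ∨ y ∈ ⋃ g' ∈ rest, U g' := by
          simpa using hy
        rcases hy' with h | h
        · exact absurd h hyg
        · exact h

open Classical in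
private lemma pickAux_sm (c : G → ℂ) (hc : Continuous c) (U : G → Set G)
    (hU : ∀ g, MeasurableSet (U g)) (l : List G) :
    StronglyMeasurable (fun p : G × G => c ((pickAux U l p.1)⁻¹ * p.2)) := by
  induction l with
  | nil =>
      have heq : (fun p : G × G => c ((pickAux U ([] : List G) p.1)⁻¹ * p.2))
          = fun p : G × G => c p.2 := by
        funext p
        show c ((1 : G)⁻¹ * p.2) = c p.2
        rw [inv_one, one_mul]
      rw [heq]
      exact (hc.measurable.comp measurable_snd).stronglyMeasurable
  | cons g rest ih =>
      have heq : (fun p : G × G => c ((pickAux U (g :: rest) p.1)⁻¹ * p.2))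
          = fun p : G × G => if p.1 ∈ U g then c (g⁻¹ * p.2)
              else c ((pickAux U rest p.1)⁻¹ * p.2) := by
        funext p
        show c ((if p.1 ∈ U g then g else pickAux U rest p.1)⁻¹ * p.2) = _
        by_cases h : p.1 ∈ U g
        · rw [if_pos h, if_pos h]
        · rw [if_neg h, if_neg h]
      rw [heq]
      have hs : MeasurableSet {p : G × G | p.1 ∈ U g} := measurable_fst (hU g)
      exact StronglyMeasurable.ite hs
        (((hc.comp (continuous_mul_left g⁻¹)).measurable.comp
          measurable_snd).stronglyMeasurable) ih

/-- On a compact group, the "convolution kernel" `(y, x) ↦ c (y⁻¹ x)` of a continuous function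
is strongly measurable for the product σ-algebra (even without second countability). -/
lemma prodSM (c : G → ℂ) (hc : Continuous c) :
    StronglyMeasurable (fun p : G × G => c (p.1⁻¹ * p.2)) := by
  have happrox : ∀ ε : ℝ, 0 < ε → ∃ s : G × G → ℂ, StronglyMeasurable s ∧
      ∀ p : G × G, ‖s p - c (p.1⁻¹ * p.2)‖ ≤ ε := by
    intro ε hε
    obtain ⟨V, hV, hVp⟩ := unif_pairs c hc hε
    have hV' : V ∩ V⁻¹ ∈ 𝓝 (1 : G) := by
      refine Filter.inter_mem hV ?_
      have : Tendsto (fun y : G => y⁻¹) (𝓝 1) (𝓝 (1 : G)) := by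
        simpa using (continuous_inv (G := G)).tendsto (1 : G)
      exact this hV
    set Vo := interior (V ∩ V⁻¹) with hVo
    have hVo_mem : Vo ∈ 𝓝 (1 : G) := by
      rw [hVo]
      exact interior_mem_nhds.mpr hV'
    set U : G → Set G := fun g => (fun y => y⁻¹ * g) ⁻¹' Vo with hU_def
    have hU_open : ∀ g, IsOpen (U g) :=
      fun g => isOpen_interior.preimage (continuous_inv.mul continuous_const)
    have hU_mem : ∀ g : G, g ∈ U g := by
      intro g
      have : (1 : G) ∈ Vo := mem_of_mem_nhds hVo_mem
      simpa [hU_def] using this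
    obtain ⟨t, ht⟩ := isCompact_univ.elim_nhds_subcover U
      (fun g _ => (hU_open g).mem_nhds (hU_mem g))
    have ht2 := ht.2
    refine ⟨fun p => c ((pickAux U t.toList p.1)⁻¹ * p.2), pickAux_sm c hc U
      (fun g => (hU_open g).measurableSet) t.toList, ?_⟩
    intro p
    have hcov : p.1 ∈ ⋃ g ∈ t.toList, U g := by
      have := ht2 (Set.mem_univ p.1)
      simpa using this
    have hmem := pickAux_spec U t.toList p.1 hcov
    set g0 := pickAux U t.toList p.1
    -- `p.1⁻¹ * g0 ∈ Vo ⊆ V ∩ V⁻¹`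
    have h1 : p.1⁻¹ * g0 ∈ V ∩ V⁻¹ := interior_subset hmem
    have h2 : g0⁻¹ * p.1 ∈ V := by
      have := h1.2
      rw [Set.mem_inv] at this
      simpa using this
    -- apply uniform continuity to the pair (p.1⁻¹ * p.2, g0⁻¹ * p.2)
    have := hVp (p.1⁻¹ * p.2) (g0⁻¹ * p.2) (by
      have : g0⁻¹ * p.2 * (p.1⁻¹ * p.2)⁻¹ = g0⁻¹ * p.1 := by group
      rw [this]; exact h2)
    exact this
  choose s hs1 hs2 using fun n : ℕ => happrox (1 / (n + 1)) (by positivity)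
  apply stronglyMeasurable_of_tendsto atTop hs1
  rw [tendsto_pi_nhds]
  intro p
  rw [tendsto_iff_dist_tendsto_zero]
  refine squeeze_zero (fun n => dist_nonneg) (fun n => ?_)
    tendsto_one_div_add_atTop_nhds_zero_nat
  rw [dist_eq_norm]
  exact hs2 n p

end ProdSM

/-! ### Unimodularity and inversion invariance of the Haar probability measure -/

section Unimodular

variable {G : Type*} [Group G] [TopologicalSpace G] [IsTopologicalGroup G]
    [CompactSpace G] [MeasurableSpace G] [BorelSpace G]
    (μ : Measure G) [μ.IsHaarMeasure] [IsProbabilityMeasure μ]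

lemma right_invariant_aux : μ.IsMulRightInvariant := by
  constructor
  intro g
  set ν := Measure.map (· * g) μ with hν
  haveI : IsProbabilityMeasure ν := Measure.isProbabilityMeasure_map (measurable_mul_const g).aemeasurable
  haveI : ν.IsMulLeftInvariant := by
    constructor
    intro h
    rw [hν, Measure.map_map (measurable_const_mul h) (measurable_mul_const g)]
    have : ((h * ·) ∘ (· * g)) = ((· * g) ∘ (h * ·)) := by
      funext x; simp [mul_assoc]
    rw [this, ← Measure.map_map (measurable_mul_const g) (measurable_const_mul h),
      map_mul_left_eq_self]
  haveI : ν.IsOpenPosMeasure := by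
    constructor
    intro U hU hUne
    rw [hν, Measure.map_apply (measurable_mul_const g) hU.measurableSet]
    apply (hU.preimage (continuous_mul_right g)).measure_ne_zero μ
    obtain ⟨u, hu⟩ := hUne
    exact ⟨u * g⁻¹, by simpa using hu⟩
  haveI : ν.IsHaarMeasure := ⟨⟩
  exact Measure.isHaarMeasure_eq_of_isProbabilityMeasure ν μ

lemma inv_invariant_aux : μ.inv = μ := by
  haveI : μ.IsMulRightInvariant := right_invariant_aux μ
  haveI : IsProbabilityMeasure μ.inv := by
    constructor
    rw [Measure.inv_apply, Set.inv_univ, measure_univ]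
  haveI : μ.inv.IsOpenPosMeasure := by
    constructor
    intro U hU hUne
    rw [Measure.inv_apply]
    apply (hU.inv).measure_ne_zero μ
    obtain ⟨u, hu⟩ := hUne
    exact ⟨u⁻¹, by simpa using hu⟩
  haveI : μ.inv.IsHaarMeasure := ⟨⟩
  exact Measure.isHaarMeasure_eq_of_isProbabilityMeasure μ.inv μ

lemma map_inv_mul_aux (x : G) : Measure.map (fun y => y⁻¹ * x) μ = μ := by
  haveI : μ.IsMulRightInvariant := right_invariant_aux μ
  have hco : (fun y : G => y⁻¹ * x) = (fun z => z * x) ∘ Inv.inv := rfl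
  rw [hco, ← Measure.map_map (measurable_mul_const x) measurable_inv]
  rw [← Measure.inv_def, inv_invariant_aux μ, map_mul_right_eq_self]

end Unimodular

/-! ### Integrability and Fubini for measurable convolution kernels -/

section Kernel

variable {G : Type*} [Group G] [TopologicalSpace G] [IsTopologicalGroup G]
    [MeasurableSpace G] [BorelSpace G]
    (σ μ : Measure G) [IsProbabilityMeasure σ] [IsProbabilityMeasure μ]
    [μ.IsMulLeftInvariant]

variable {E : Type*} [NormedAddCommGroup E] [NormedSpace ℝ E] [CompleteSpace E]

lemma translate_int {k : G → E} (hk : Integrable k μ) (y : G) :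
    Integrable (fun x => k (y * x)) μ :=
  ((measurePreserving_mul_left μ y).integrable_comp hk.aestronglyMeasurable).mpr hk

lemma kernel_integrable {k : G → E}
    (hSM : StronglyMeasurable (fun p : G × G => k (p.1⁻¹ * p.2)))
    (hk : Integrable k μ) :
    Integrable (fun p : G × G => k (p.1⁻¹ * p.2)) (σ.prod μ) := by
  rw [integrable_prod_iff hSM.aestronglyMeasurable]
  constructor
  · exact Eventually.of_forall fun y => translate_int μ hk y⁻¹
  · have heq : (fun y : G => ∫ x, ‖k (y⁻¹ * x)‖ ∂μ) = fun _ => ∫ z, ‖k z‖ ∂μ := by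
      funext y
      exact integral_mul_left_eq_self (fun z => ‖k z‖) y⁻¹
    rw [heq]
    exact integrable_const _

lemma kernel_integral {k : G → E}
    (hSM : StronglyMeasurable (fun p : G × G => k (p.1⁻¹ * p.2)))
    (hk : Integrable k μ) :
    ∫ p, k (p.1⁻¹ * p.2) ∂(σ.prod μ) = ∫ z, k z ∂μ := by
  rw [integral_prod _ (kernel_integrable σ μ hSM hk)]
  have heq : (fun y : G => ∫ x, k (y⁻¹ * x) ∂μ) = fun _ => ∫ z, k z ∂μ := by
    funext y
    exact integral_mul_left_eq_self k y⁻¹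
  rw [heq]
  simp

end Kernel

/-! ### The key null-set transfer lemma, via Halmos' completion regularity -/

section Wall

variable {G : Type*} [Group G] [TopologicalSpace G] [IsTopologicalGroup G]
    [CompactSpace G] [MeasurableSpace G] [BorelSpace G]
    (μ σ : Measure G) [μ.IsHaarMeasure] [IsProbabilityMeasure μ] [IsProbabilityMeasure σ]

/-- If `N` is a Haar-null Borel set in a compact group, then for almost every `x` the set of
`y` with `y⁻¹ * x ∈ N` is `σ`-null, for any Borel probability measure `σ`.  This crucially
uses Halmos' theorem (completion regularity of Haar measure) to cross the joint-measurability
gap present in non-metrizable groups. -/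
lemma wall {N : Set G} (hNm : MeasurableSet N) (hN : μ N = 0) :
    ∀ᵐ x ∂μ, σ {y : G | y⁻¹ * x ∈ N} = 0 := by
  have hIR := Measure.innerRegularWRT_preimage_one_hasCompactSupport_measure_ne_top_of_group
    (μ := μ)
  -- for each n, find a zero set `Z n ⊆ Nᶜ` with `μ (Z n)ᶜ ≤ 1/(n+1)`
  have hstep : ∀ n : ℕ, ∃ c : G → ℝ, Continuous c ∧ c ⁻¹' {1} ⊆ Nᶜ ∧
      μ ((c ⁻¹' {1})ᶜ) ≤ 1 / ((n : ℝ≥0∞) + 1) := by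
    intro n
    set ε : ℝ≥0∞ := 1 / ((n : ℝ≥0∞) + 1) with hε_def
    have hε_le_one : ε ≤ 1 := by
      rw [hε_def]
      apply ENNReal.div_le_of_le_mul
      simp [le_add_iff_nonneg_left]
    have hε_pos : 0 < ε := by
      rw [hε_def]
      apply ENNReal.div_pos one_ne_zero
      exact ENNReal.add_ne_top.mpr ⟨ENNReal.natCast_ne_top n, ENNReal.one_ne_top⟩
    have hNc : μ Nᶜ = 1 := by
      have := measure_compl hNm (by simp : μ N ≠ ∞)
      rw [hN, measure_univ] at this
      simpa using this
    have hr : (1 : ℝ≥0∞) - ε < μ Nᶜ := by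
      rw [hNc]
      exact ENNReal.sub_lt_self ENNReal.one_ne_top one_ne_zero hε_pos.ne'
    obtain ⟨Z, hZsub, ⟨c, hc_cont, _, hZeq⟩, hZgt⟩ := hIR ⟨hNm.compl, by simp⟩ _ hr
    refine ⟨c, hc_cont, by rw [← hZeq]; exact hZsub, ?_⟩
    have hZm : MeasurableSet (c ⁻¹' {1}) := (isClosed_singleton.preimage hc_cont).measurableSet
    rw [measure_compl hZm (by simp : μ (c ⁻¹' {1}) ≠ ∞), measure_univ]
    rw [tsub_le_iff_right]
    calc (1 : ℝ≥0∞) = (1 - ε) + ε := (tsub_add_cancel_of_le hε_le_one).symm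
      _ ≤ μ Z + ε := add_le_add_left hZgt.le _
      _ = ε + μ (c ⁻¹' {1}) := by rw [hZeq, add_comm]
  choose c hc_cont hc_sub hc_small using hstep
  -- the product-measurable kernel sets
  set s : ℕ → Set (G × G) := fun n => {p : G × G | ((c n (p.1⁻¹ * p.2) : ℝ) : ℂ) ≠ 1}
    with hs_def
  have hcC : ∀ n, Continuous (fun z : G => ((c n z : ℝ) : ℂ)) := fun n =>
    Complex.continuous_ofReal.comp (hc_cont n)
  have hsm : ∀ n, MeasurableSet (s n) := by
    intro n
    have := (prodSM (fun z : G => ((c n z : ℝ) : ℂ)) (hcC n)).measurable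
    exact this (measurableSet_singleton (1 : ℂ)).compl
  -- slice measures in the second variable
  set ρ : ℕ → G → ℝ≥0∞ := fun n x => σ {y : G | (y, x) ∈ s n} with hρ_def
  have hρ_meas : ∀ n, Measurable (ρ n) := by
    intro n
    have h1 : MeasurableSet (Prod.swap ⁻¹' (s n)) := measurable_swap (hsm n)
    have := measurable_measure_prodMk_left (ν := σ) h1
    convert this using 2
    rfl
  have hρ_int : ∀ n, ∫⁻ x, ρ n x ∂μ ≤ 1 / ((n : ℝ≥0∞) + 1) := by
    intro n
    have h1 : MeasurableSet (Prod.swap ⁻¹' (s n)) := measurable_swap (hsm n)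
    have h2 : ∫⁻ x, ρ n x ∂μ = (μ.prod σ) (Prod.swap ⁻¹' (s n)) := by
      rw [Measure.prod_apply h1]
      rfl
    have h3 : (μ.prod σ) (Prod.swap ⁻¹' (s n)) = (σ.prod μ) (s n) := by
      have hps : (μ.prod σ).map Prod.swap = σ.prod μ := Measure.prod_swap
      conv_rhs => rw [← hps]
      rw [Measure.map_apply measurable_swap (hsm n)]
    have h4 : (σ.prod μ) (s n) = ∫⁻ y, μ {x : G | (y, x) ∈ s n} ∂σ := by
      rw [Measure.prod_apply (hsm n)]
      rfl
    have h5 : ∀ y : G, μ {x : G | (y, x) ∈ s n} = μ ((c n ⁻¹' {1})ᶜ) := by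
      intro y
      have : {x : G | (y, x) ∈ s n} = (fun x => y⁻¹ * x) ⁻¹' ((c n ⁻¹' {1})ᶜ) := by
        ext x
        simp only [hs_def, Set.mem_setOf_eq, Set.mem_preimage, Set.mem_compl_iff,
          Set.mem_singleton_iff]
        constructor
        · intro h h'
          exact h (by rw [h']; norm_num)
        · intro h h'
          apply h
          exact_mod_cast h'
      rw [this, measure_preimage_mul]
    rw [h2, h3, h4]
    calc ∫⁻ y, μ {x : G | (y, x) ∈ s n} ∂σ
        = ∫⁻ _y, μ ((c n ⁻¹' {1})ᶜ) ∂σ := by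
          congr 1
          funext y
          exact h5 y
      _ = μ ((c n ⁻¹' {1})ᶜ) := by simp
      _ ≤ 1 / ((n : ℝ≥0∞) + 1) := hc_small n
  set F : G → ℝ≥0∞ := fun x => ⨅ n, ρ n x with hF_def
  have hF_meas : Measurable F := Measurable.iInf hρ_meas
  have hF_zero : ∫⁻ x, F x ∂μ = 0 := by
    by_contra hne
    have hpos : 0 < ∫⁻ x, F x ∂μ := pos_iff_ne_zero.mpr hne
    obtain ⟨n, hn⟩ := ENNReal.exists_inv_nat_lt hne
    have hle : ∫⁻ x, F x ∂μ ≤ 1 / ((n : ℝ≥0∞) + 1) := by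
      refine le_trans ?_ (hρ_int n)
      apply lintegral_mono
      intro x
      exact iInf_le _ n
    have : (1 : ℝ≥0∞) / ((n : ℝ≥0∞) + 1) ≤ ((n : ℝ≥0∞))⁻¹ := by
      rw [one_div]
      exact ENNReal.inv_le_inv.mpr (le_add_right le_rfl)
    exact absurd (hle.trans this) (not_le.mpr hn)
  have hF_ae : ∀ᵐ x ∂μ, F x = 0 := by
    have := (lintegral_eq_zero_iff hF_meas).mp hF_zero
    filter_upwards [this] with x hx
    exact hx
  filter_upwards [hF_ae] with x hx
  have hsub : {y : G | y⁻¹ * x ∈ N} ⊆ {y : G | (y, x) ∈ s 0} := by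
    intro y hy
    simp only [hs_def, Set.mem_setOf_eq]
    intro h
    have : y⁻¹ * x ∈ c 0 ⁻¹' {1} := by
      simp only [Set.mem_preimage, Set.mem_singleton_iff]
      exact_mod_cast h
    exact (hc_sub 0 this) hy
  refine le_antisymm ?_ zero_le
  calc σ {y : G | y⁻¹ * x ∈ N} ≤ F x := by
        rw [hF_def]
        refine le_iInf fun n => ?_
        apply measure_mono
        intro y hy
        simp only [hs_def, Set.mem_setOf_eq]
        intro h
        have hy1 : y⁻¹ * x ∈ c n ⁻¹' {1} := by
          simp only [Set.mem_preimage, Set.mem_singleton_iff]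
          exact_mod_cast h
        exact (hc_sub n hy1) hy
    _ = 0 := hx

end Wall

/-! ### Continuity of the translation defect in `L¹` -/

section Translation

variable {G : Type*} [Group G] [TopologicalSpace G] [IsTopologicalGroup G]
    [CompactSpace G] [MeasurableSpace G] [BorelSpace G]
    (μ : Measure G) [μ.IsHaarMeasure] [IsProbabilityMeasure μ]

lemma D_tendsto {g : G → ℂ} (hgi : Integrable g μ) :
    Tendsto (fun s => ∫ x, ‖g (s * x) - g x‖ ∂μ) (𝓝 (1 : G)) (𝓝 0) := by
  rw [Metric.tendsto_nhds]
  intro ε hε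
  have hε4 : (0:ℝ) < ε / 4 := by linarith
  obtain ⟨cb, hcb_close, hcb_int⟩ := hgi.exists_boundedContinuous_integral_sub_le hε4
  obtain ⟨U, hU, hUc⟩ := unif_pairs (cb : G → ℂ) cb.continuous hε4
  filter_upwards [hU] with t ht
  have htri : ∀ x : G, ‖g (t * x) - g x‖ ≤
      ‖g (t * x) - (cb : G → ℂ) (t * x)‖ + ‖(cb : G → ℂ) (t * x) - (cb : G → ℂ) x‖
        + ‖(cb : G → ℂ) x - g x‖ := by
    intro x
    have := dist_triangle4 (g (t * x)) ((cb : G → ℂ) (t * x)) ((cb : G → ℂ) x) (g x)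
    simpa [dist_eq_norm] using this
  have hgsint : Integrable (fun x => g (t * x)) μ := translate_int μ hgi t
  have hcbsint : Integrable (fun x => (cb : G → ℂ) (t * x)) μ := translate_int μ hcb_int t
  have hint1 : Integrable (fun x => ‖g (t * x) - (cb : G → ℂ) (t * x)‖) μ :=
    (hgsint.sub hcbsint).norm
  have hint2 : Integrable (fun x => ‖(cb : G → ℂ) (t * x) - (cb : G → ℂ) x‖) μ :=
    (hcbsint.sub hcb_int).norm
  have hint3 : Integrable (fun x => ‖(cb : G → ℂ) x - g x‖) μ := (hcb_int.sub hgi).norm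
  have hintD : Integrable (fun x => ‖g (t * x) - g x‖) μ := (hgsint.sub hgi).norm
  have hb1 : ∫ x, ‖g (t * x) - (cb : G → ℂ) (t * x)‖ ∂μ ≤ ε / 4 := by
    have heq : ∫ x, ‖g (t * x) - (cb : G → ℂ) (t * x)‖ ∂μ
        = ∫ x, ‖g x - (cb : G → ℂ) x‖ ∂μ :=
      integral_mul_left_eq_self (fun z => ‖g z - (cb : G → ℂ) z‖) t
    rw [heq]; exact hcb_close
  have hb2 : ∫ x, ‖(cb : G → ℂ) (t * x) - (cb : G → ℂ) x‖ ∂μ ≤ ε / 4 := by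
    calc ∫ x, ‖(cb : G → ℂ) (t * x) - (cb : G → ℂ) x‖ ∂μ
        ≤ ∫ _x, (ε / 4 : ℝ) ∂μ := by
          refine integral_mono hint2 (integrable_const _) fun x => ?_
          refine hUc x (t * x) ?_
          simpa using ht
      _ = ε / 4 := by simp
  have hb3 : ∫ x, ‖(cb : G → ℂ) x - g x‖ ∂μ ≤ ε / 4 := by
    have heq : ∫ x, ‖(cb : G → ℂ) x - g x‖ ∂μ = ∫ x, ‖g x - (cb : G → ℂ) x‖ ∂μ := by
      simp_rw [norm_sub_rev]
    rw [heq]; exact hcb_close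
  have hDle : ∫ x, ‖g (t * x) - g x‖ ∂μ ≤ ε / 4 + ε / 4 + ε / 4 := by
    calc ∫ x, ‖g (t * x) - g x‖ ∂μ
        ≤ ∫ x, (‖g (t * x) - (cb : G → ℂ) (t * x)‖ + ‖(cb : G → ℂ) (t * x) - (cb : G → ℂ) x‖
            + ‖(cb : G → ℂ) x - g x‖) ∂μ :=
          integral_mono hintD ((hint1.add hint2).add hint3) fun x => htri x
      _ = (∫ x, (‖g (t * x) - (cb : G → ℂ) (t * x)‖
            + ‖(cb : G → ℂ) (t * x) - (cb : G → ℂ) x‖) ∂μ)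
            + ∫ x, ‖(cb : G → ℂ) x - g x‖ ∂μ := integral_add (hint1.add hint2) hint3
      _ = (∫ x, ‖g (t * x) - (cb : G → ℂ) (t * x)‖ ∂μ)
            + (∫ x, ‖(cb : G → ℂ) (t * x) - (cb : G → ℂ) x‖ ∂μ)
            + ∫ x, ‖(cb : G → ℂ) x - g x‖ ∂μ := by
          rw [integral_add hint1 hint2]
      _ ≤ ε / 4 + ε / 4 + ε / 4 := add_le_add (add_le_add hb1 hb2) hb3
  have hD0 : 0 ≤ ∫ x, ‖g (t * x) - g x‖ ∂μ := integral_nonneg fun x => norm_nonneg _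
  rw [Real.dist_eq, sub_zero, abs_of_nonneg hD0]
  linarith

lemma F_continuous {g : G → ℂ} (hgi : Integrable g μ) :
    Continuous (fun y => ∫ x, ‖g (y⁻¹ * x) - g x‖ ∂μ) := by
  rw [continuous_iff_continuousAt]
  intro y₀
  have hbound : ∀ y : G, dist (∫ x, ‖g (y⁻¹ * x) - g x‖ ∂μ) (∫ x, ‖g (y₀⁻¹ * x) - g x‖ ∂μ)
      ≤ ∫ x, ‖g ((y⁻¹ * y₀) * x) - g x‖ ∂μ := by
    intro y
    have hti : ∀ z : G, Integrable (fun x => ‖g (z * x) - g x‖) μ := fun z =>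
      ((translate_int μ hgi z).sub hgi).norm
    have h1 : Integrable (fun x => ‖g (y⁻¹ * x) - g x‖) μ := hti y⁻¹
    have h2 : Integrable (fun x => ‖g (y₀⁻¹ * x) - g x‖) μ := hti y₀⁻¹
    rw [Real.dist_eq, ← integral_sub h1 h2]
    have habs : |∫ x, (‖g (y⁻¹ * x) - g x‖ - ‖g (y₀⁻¹ * x) - g x‖) ∂μ|
        ≤ ∫ x, ‖g (y⁻¹ * x) - g (y₀⁻¹ * x)‖ ∂μ := by
      have h3 : Integrable (fun x => g (y⁻¹ * x) - g (y₀⁻¹ * x)) μ :=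
        (translate_int μ hgi y⁻¹).sub (translate_int μ hgi y₀⁻¹)
      calc |∫ x, (‖g (y⁻¹ * x) - g x‖ - ‖g (y₀⁻¹ * x) - g x‖) ∂μ|
          ≤ ∫ x, |‖g (y⁻¹ * x) - g x‖ - ‖g (y₀⁻¹ * x) - g x‖| ∂μ := by
            simpa [Real.norm_eq_abs] using norm_integral_le_integral_norm
              (fun x => (‖g (y⁻¹ * x) - g x‖ - ‖g (y₀⁻¹ * x) - g x‖))
        _ ≤ ∫ x, ‖g (y⁻¹ * x) - g (y₀⁻¹ * x)‖ ∂μ := by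
            refine integral_mono (h1.sub h2).abs h3.norm fun x => ?_
            have := abs_norm_sub_norm_le (g (y⁻¹ * x) - g x) (g (y₀⁻¹ * x) - g x)
            simpa [sub_sub_sub_cancel_right] using this
    refine habs.trans ?_
    have heq : ∫ x, ‖g (y⁻¹ * x) - g (y₀⁻¹ * x)‖ ∂μ
        = ∫ x, ‖g ((y⁻¹ * y₀) * x) - g x‖ ∂μ := by
      have h4 := integral_mul_left_eq_self (μ := μ) (fun x => ‖g (y⁻¹ * x) - g (y₀⁻¹ * x)‖) y₀
      rw [← h4]
      congr 1
      funext x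
      congr 2
      · rw [mul_assoc]
      · rw [inv_mul_cancel_left]
    rw [heq]
  have htend : Tendsto (fun y : G => ∫ x, ‖g ((y⁻¹ * y₀) * x) - g x‖ ∂μ) (𝓝 y₀) (𝓝 0) := by
    have hcomp : Tendsto (fun y : G => y⁻¹ * y₀) (𝓝 y₀) (𝓝 1) := by
      have hco : Continuous (fun y : G => y⁻¹ * y₀) := continuous_inv.mul continuous_const
      have h := hco.tendsto y₀
      simpa using h
    exact (D_tendsto μ hgi).comp hcomp
  have := squeeze_zero (fun y => dist_nonneg) hbound htend
  rw [ContinuousAt, tendsto_iff_dist_tendsto_zero]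
  exact this

end Translation

/-- Let `G` be a compact group with (normalized) Haar measure `μ` and `σ` an
adapted probability measure on `G` (the closed subgroup generated by `supp σ` is `G`).  Then
for every `1 ≤ p ≤ ∞`, `H_σ^p(G) = ℂ·1`: every `σ`-harmonic `L^p`-function is constant almost
everywhere. -/
theorem harmonic_Lp_constant_compact
    {G : Type*} [Group G] [TopologicalSpace G] [IsTopologicalGroup G]
    [CompactSpace G] [MeasurableSpace G] [BorelSpace G]
    (μ : Measure G) [μ.IsHaarMeasure] [IsProbabilityMeasure μ]
    (σ : Measure G) [IsProbabilityMeasure σ]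
    (hadapted : closure (⋃ n : ℕ, (msupport σ ∪ (msupport σ)⁻¹) ^ (n + 1)) = Set.univ)
    (p : ℝ≥0∞) (hp : 1 ≤ p) :
    ∀ f : G → ℂ, MemLp f p μ →
      (fun x => ∫ y, f (y⁻¹ * x) ∂σ) =ᵐ[μ] f →
      ∃ c : ℂ, f =ᵐ[μ] fun _ => c := by
  classical
  intro f hfmem hharm
  have hfint : Integrable f μ := hfmem.integrable hp
  -- continuous approximations of `f` in `L¹`, converging a.e. along a subsequence
  have happrox : ∀ k : ℕ, ∃ c : BoundedContinuousFunction G ℂ, (∫ x, ‖f x - c x‖ ∂μ) ≤ (1/2 : ℝ)^k ∧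
      Integrable (c : G → ℂ) μ :=
    fun k => hfint.exists_boundedContinuous_integral_sub_le (by positivity)
  choose cb hcb hcbi using happrox
  have hAESM : ∀ k, AEStronglyMeasurable (fun x => (cb k : G → ℂ) x) μ := fun k =>
    ((cb k).continuous.measurable).aestronglyMeasurable
  have heLp : Tendsto (fun k => eLpNorm ((cb k : G → ℂ) - f) 1 μ) atTop (𝓝 0) := by
    have hbound : ∀ k, eLpNorm ((cb k : G → ℂ) - f) 1 μ ≤ ENNReal.ofReal ((1/2 : ℝ)^k) := by
      intro k
      have hint : Integrable ((cb k : G → ℂ) - f) μ := (hcbi k).sub hfint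
      rw [eLpNorm_one_eq_lintegral_enorm]
      rw [← ofReal_integral_norm_eq_lintegral_enorm hint]
      apply ENNReal.ofReal_le_ofReal
      have : ∫ x, ‖((cb k : G → ℂ) - f) x‖ ∂μ = ∫ x, ‖f x - (cb k : G → ℂ) x‖ ∂μ := by
        congr 1
        funext x
        rw [Pi.sub_apply, norm_sub_rev]
      rw [this]
      exact hcb k
    have hgeo : Tendsto (fun k : ℕ => ENNReal.ofReal ((1/2 : ℝ)^k)) atTop (𝓝 0) := by
      have : Tendsto (fun k : ℕ => (1/2 : ℝ)^k) atTop (𝓝 0) :=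
        tendsto_pow_atTop_nhds_zero_of_lt_one (by norm_num) (by norm_num)
      have h2 := (ENNReal.continuous_ofReal.tendsto 0).comp this
      simpa [Function.comp_def] using h2
    exact tendsto_of_tendsto_of_tendsto_of_le_of_le tendsto_const_nhds hgeo
      (fun k => zero_le) hbound
  have hTIM : TendstoInMeasure μ (fun k => (cb k : G → ℂ)) atTop f :=
    tendstoInMeasure_of_tendsto_eLpNorm one_ne_zero hAESM hfint.1 heLp
  obtain ⟨ns, _, hae⟩ := hTIM.exists_seq_tendsto_ae
  set e : ℕ → G → ℂ := fun i => (cb (ns i) : G → ℂ) with he_def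
  have he_cont : ∀ i, Continuous (e i) := fun i => (cb (ns i)).continuous
  -- the Baire-type representative `g` of `f`
  set S : Set G := {x : G | ∃ l : ℂ, Tendsto (fun i => e i x) atTop (𝓝 l)} with hS_def
  have hSm : MeasurableSet S := measurableSet_exists_tendsto (fun i => (he_cont i).measurable)
  set g : G → ℂ :=
    fun x => if h : ∃ l : ℂ, Tendsto (fun i => e i x) atTop (𝓝 l) then h.choose else 0
    with hg_def
  have hg_lim : ∀ (x : G) (h : ∃ l : ℂ, Tendsto (fun i => e i x) atTop (𝓝 l)),
      Tendsto (fun i => e i x) atTop (𝓝 (g x)) := by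
    intro x h
    rw [hg_def]
    simp only [dif_pos h]
    exact h.choose_spec
  have hgSM : StronglyMeasurable g := by
    apply stronglyMeasurable_of_tendsto atTop
      (fun i => ((he_cont i).measurable.stronglyMeasurable).indicator hSm)
    rw [tendsto_pi_nhds]
    intro x
    by_cases hx : ∃ l : ℂ, Tendsto (fun i => e i x) atTop (𝓝 l)
    · have hxS : x ∈ S := hx
      have heq : (fun i => (S.indicator (e i)) x) = fun i => e i x := by
        funext i; rw [Set.indicator_of_mem hxS]
      rw [heq]
      exact hg_lim x hx
    · have hxS : x ∉ S := hx
      have heq : (fun i => (S.indicator (e i)) x) = fun _ => 0 := by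
        funext i; rw [Set.indicator_of_notMem hxS]
      rw [heq, hg_def]
      simp only [dif_neg hx]
      exact tendsto_const_nhds
  -- the convolution kernel of `g` is product measurable
  set S2 : Set (G × G) :=
      {q : G × G | ∃ l : ℂ, Tendsto (fun i => e i (q.1⁻¹ * q.2)) atTop (𝓝 l)} with hS2_def
  have hS2m : MeasurableSet S2 :=
    measurableSet_exists_tendsto (fun i => (prodSM (e i) (he_cont i)).measurable)
  have hgTSM : StronglyMeasurable (fun q : G × G => g (q.1⁻¹ * q.2)) := by
    apply stronglyMeasurable_of_tendsto atTop
      (fun i => (prodSM (e i) (he_cont i)).indicator hS2m)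
    rw [tendsto_pi_nhds]
    intro q
    by_cases hq : ∃ l : ℂ, Tendsto (fun i => e i (q.1⁻¹ * q.2)) atTop (𝓝 l)
    · have hqS : q ∈ S2 := hq
      have heq : (fun i => (S2.indicator (fun r : G × G => e i (r.1⁻¹ * r.2))) q)
          = fun i => e i (q.1⁻¹ * q.2) := by
        funext i; rw [Set.indicator_of_mem hqS]
      rw [heq]
      exact hg_lim (q.1⁻¹ * q.2) hq
    · have hqS : q ∉ S2 := hq
      have heq : (fun i => (S2.indicator (fun r : G × G => e i (r.1⁻¹ * r.2))) q)
          = fun _ => 0 := by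
        funext i; rw [Set.indicator_of_notMem hqS]
      rw [heq]
      have : g (q.1⁻¹ * q.2) = 0 := by
        rw [hg_def]
        simp only [dif_neg hq]
      rw [this]
      exact tendsto_const_nhds
  have hfg : f =ᵐ[μ] g := by
    filter_upwards [hae] with x hx
    exact (tendsto_nhds_unique (hg_lim x ⟨f x, hx⟩) hx).symm
  have hgi : Integrable g μ := hfint.congr hfg
  -- the wall lemma: transfer of the hypothesis to the good representative
  set N₀ : Set G := toMeasurable μ {x | f x ≠ g x} with hN₀_def
  have hN₀m : MeasurableSet N₀ := measurableSet_toMeasurable μ _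
  have hN₀0 : μ N₀ = 0 := by
    rw [hN₀_def, measure_toMeasurable]
    exact hfg
  have hwall := wall μ σ hN₀m hN₀0
  have hslice_eq : ∀ᵐ x ∂μ, (fun y => f (y⁻¹ * x)) =ᵐ[σ] (fun y => g (y⁻¹ * x)) := by
    filter_upwards [hwall] with x hx
    have h0 : ∀ᵐ y ∂σ, y⁻¹ * x ∉ N₀ := by
      rw [ae_iff]
      simpa using hx
    filter_upwards [h0] with y hy
    by_contra hne
    exact hy (subset_toMeasurable μ _ hne)
  have hharm' : ∀ᵐ x ∂μ, ∫ y, g (y⁻¹ * x) ∂σ = g x := by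
    filter_upwards [hslice_eq, hharm, hfg] with x h1 h2 h3
    calc ∫ y, g (y⁻¹ * x) ∂σ = ∫ y, f (y⁻¹ * x) ∂σ := integral_congr_ae h1.symm
      _ = f x := h2
      _ = g x := h3
  -- integrability of kernels
  have hTgi : Integrable (fun q : G × G => g (q.1⁻¹ * q.2)) (σ.prod μ) :=
    kernel_integrable σ μ hgTSM hgi
  have hphig : Integrable (fun x => phiC (g x)) μ := by
    refine Integrable.mono (hgi.norm.add (integrable_const (1:ℝ)))
      (phiC_continuous.comp_aestronglyMeasurable hgi.1) ?_
    filter_upwards with x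
    have h3 : (((fun x => ‖g x‖) + fun _ => (1:ℝ)) : G → ℝ) x = ‖g x‖ + 1 := rfl
    rw [Real.norm_eq_abs, abs_of_nonneg (phiC_nonneg _), h3]
    have h1 : phiC (g x) ≤ 1 + ‖g x‖ := phiC_le _
    have h2 : (0:ℝ) ≤ ‖g x‖ := norm_nonneg _
    rw [Real.norm_eq_abs, abs_of_nonneg (by positivity : (0:ℝ) ≤ ‖g x‖ + 1)]
    linarith
  have hphiTSM : StronglyMeasurable (fun q : G × G => phiC (g (q.1⁻¹ * q.2))) :=
    phiC_continuous.comp_stronglyMeasurable hgTSM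
  have hTphig : Integrable (fun q : G × G => phiC (g (q.1⁻¹ * q.2))) (σ.prod μ) :=
    kernel_integrable σ μ hphiTSM hphig
  have hslice : ∀ᵐ x ∂μ, Integrable (fun y => g (y⁻¹ * x)) σ := hTgi.prod_left_ae
  have hslicephi : ∀ᵐ x ∂μ, Integrable (fun y => phiC (g (y⁻¹ * x))) σ := hTphig.prod_left_ae
  -- the Jensen defect
  set W : G → ℝ := fun x => (∫ y, phiC (g (y⁻¹ * x)) ∂σ) - phiC (g x) with hW_def
  have hint_left : Integrable (fun x => ∫ y, phiC (g (y⁻¹ * x)) ∂σ) μ :=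
    hTphig.integral_prod_right
  have hWint : Integrable W μ := hint_left.sub hphig
  have hWzero : ∫ x, W x ∂μ = 0 := by
    have h1 : ∫ x, ∫ y, phiC (g (y⁻¹ * x)) ∂σ ∂μ
        = ∫ q, phiC (g (q.1⁻¹ * q.2)) ∂(σ.prod μ) :=
      (integral_prod_symm _ hTphig).symm
    have h2 : ∫ q, phiC (g (q.1⁻¹ * q.2)) ∂(σ.prod μ) = ∫ z, phiC (g z) ∂μ :=
      kernel_integral σ μ hphiTSM hphig
    rw [hW_def, integral_sub hint_left hphig, h1, h2, sub_self]
  -- the strict Jensen dichotomy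
  have key : ∀ᵐ x ∂μ, 0 ≤ W x ∧ (W x = 0 → ∀ᵐ y ∂σ, g (y⁻¹ * x) = g x) := by
    filter_upwards [hslice, hslicephi, hharm'] with x hsl hslphi hhx
    rcases phiC_strictConvexOn.ae_eq_const_or_map_average_lt phiC_continuous.continuousOn
        isClosed_univ (Eventually.of_forall fun _ => Set.mem_univ _) hsl hslphi with hconst | hlt
    · have havg : (⨍ y, g (y⁻¹ * x) ∂σ) = g x := by
        rw [average_eq_integral]; exact hhx
      have hconst' : ∀ᵐ y ∂σ, g (y⁻¹ * x) = g x := by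
        filter_upwards [hconst] with y hy
        rw [hy, Function.const_apply, havg]
      have hWx : W x = 0 := by
        have hphiconst : ∫ y, phiC (g (y⁻¹ * x)) ∂σ = phiC (g x) := by
          rw [integral_congr_ae (show (fun y => phiC (g (y⁻¹ * x))) =ᵐ[σ]
            (fun _ => phiC (g x)) by filter_upwards [hconst'] with y hy; rw [hy])]
          simp
        simp only [hW_def, hphiconst, sub_self]
      exact ⟨le_of_eq hWx.symm, fun _ => hconst'⟩
    · rw [average_eq_integral, average_eq_integral] at hlt
      rw [hhx] at hlt
      have hWx : 0 < W x := by
        simp only [hW_def, sub_pos]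
        exact hlt
      exact ⟨hWx.le, fun h0 => absurd h0 hWx.ne'⟩
  have hWeq0 : W =ᵐ[μ] 0 := by
    have hnn : 0 ≤ᵐ[μ] W := by filter_upwards [key] with x hx using hx.1
    exact (integral_eq_zero_iff_of_nonneg_ae hnn hWint).mp hWzero
  have hae1 : ∀ᵐ x ∂μ, ∀ᵐ y ∂σ, g (y⁻¹ * x) = g x := by
    filter_upwards [key, hWeq0] with x hx hWx
    exact hx.2 hWx
  -- pass to the `σ` side
  have hNmeas : MeasurableSet {q : G × G | g (q.1⁻¹ * q.2) = g q.2} :=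
    measurableSet_eq_fun hgTSM.measurable (hgSM.measurable.comp measurable_snd)
  have hPA : (σ.prod μ) {q : G × G | g (q.1⁻¹ * q.2) = g q.2}ᶜ = 0 := by
    have hswap : (σ.prod μ) {q : G × G | g (q.1⁻¹ * q.2) = g q.2}ᶜ
        = (μ.prod σ) (Prod.swap ⁻¹' {q : G × G | g (q.1⁻¹ * q.2) = g q.2}ᶜ) := by
      rw [← Measure.prod_swap, Measure.map_apply measurable_swap hNmeas.compl]
    rw [hswap, Measure.measure_prod_null (measurable_swap hNmeas.compl)]
    filter_upwards [hae1] with x hx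
    rw [ae_iff] at hx
    exact hx
  have hae2 : ∀ᵐ y ∂σ, (fun x => g (y⁻¹ * x)) =ᵐ[μ] g := by
    have hPA' : ∀ᵐ q ∂(σ.prod μ), g (q.1⁻¹ * q.2) = g q.2 := by
      rw [ae_iff]; exact hPA
    exact Measure.ae_ae_of_ae_prod hPA'
  -- the closed subgroup of essential periods
  set F : G → ℝ := fun y => ∫ x, ‖g (y⁻¹ * x) - g x‖ ∂μ with hF_def
  have hFint : ∀ y : G, Integrable (fun x => ‖g (y⁻¹ * x) - g x‖) μ := fun y =>
    ((translate_int μ hgi y⁻¹).sub hgi).norm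
  have hF0 : ∀ y : G, F y = 0 ↔ (fun x => g (y⁻¹ * x)) =ᵐ[μ] g := by
    intro y
    rw [hF_def]
    rw [integral_eq_zero_iff_of_nonneg_ae (Eventually.of_forall fun x => norm_nonneg _)
      (hFint y)]
    constructor
    · intro h
      filter_upwards [h] with x hx
      have : ‖g (y⁻¹ * x) - g x‖ = 0 := hx
      rwa [norm_eq_zero, sub_eq_zero] at this
    · intro h
      filter_upwards [h] with x hx
      show ‖g (y⁻¹ * x) - g x‖ = 0
      rw [hx, sub_self, norm_zero]
  have hFcont : Continuous F := F_continuous μ hgi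
  have hHclosed : IsClosed {y : G | F y = 0} := isClosed_eq hFcont continuous_const
  have hinv : ∀ y : G, F y = 0 → F y⁻¹ = 0 := by
    intro y hy
    rw [hF0] at hy ⊢
    have h := (measurePreserving_mul_left μ y).quasiMeasurePreserving.ae hy
    filter_upwards [h] with x hx
    simp only [inv_mul_cancel_left] at hx
    rw [inv_inv]
    exact hx.symm
  have hmul : ∀ y z : G, F y = 0 → F z = 0 → F (y * z) = 0 := by
    intro y z hy hz
    rw [hF0] at hy hz ⊢
    have hz' := (measurePreserving_mul_left μ y⁻¹).quasiMeasurePreserving.ae hz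
    filter_upwards [hy, hz'] with x h1 h2
    calc g ((y * z)⁻¹ * x) = g (z⁻¹ * (y⁻¹ * x)) := by rw [mul_inv_rev, mul_assoc]
      _ = g (y⁻¹ * x) := h2
      _ = g x := h1
  have hσH : ∀ᵐ y ∂σ, y ∈ {y : G | F y = 0} := by
    filter_upwards [hae2] with y hy
    exact (hF0 y).mpr hy
  have hsupp : msupport σ ⊆ {y : G | F y = 0} := by
    intro y hy
    by_contra hyH
    refine hy {y : G | F y = 0}ᶜ hHclosed.isOpen_compl hyH ?_
    rw [ae_iff] at hσH
    exact hσH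
  have hbase : (msupport σ ∪ (msupport σ)⁻¹) ⊆ {y : G | F y = 0} := by
    refine Set.union_subset hsupp ?_
    intro y hy
    rw [Set.mem_inv] at hy
    have := hinv y⁻¹ (hsupp hy)
    rwa [inv_inv] at this
  have hsub : (⋃ n : ℕ, (msupport σ ∪ (msupport σ)⁻¹) ^ (n + 1)) ⊆ {y : G | F y = 0} := by
    refine Set.iUnion_subset fun n => ?_
    induction n with
    | zero => simpa [pow_one] using hbase
    | succ k ih =>
        rw [pow_succ]
        exact Set.mul_subset_iff.2 fun a ha b hb => hmul a b (ih ha) (hbase hb)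
  have hH_univ : ∀ y : G, F y = 0 := by
    have hclosure : Set.univ ⊆ {y : G | F y = 0} := by
      rw [← hadapted]
      exact closure_minimal hsub hHclosed
    intro y
    exact hclosure (Set.mem_univ y)
  -- conclude: `g` is invariant under all translations, hence a.e. constant
  have hall : ∀ y : G, (fun x => g (y⁻¹ * x)) =ᵐ[μ] g := fun y => (hF0 y).1 (hH_univ y)
  have hA2 : (μ.prod μ) {q : G × G | g (q.1⁻¹ * q.2) = g q.2}ᶜ = 0 := by
    rw [Measure.measure_prod_null hNmeas.compl]
    refine Eventually.of_forall fun y => ?_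
    have h := hall y
    rw [Filter.EventuallyEq, ae_iff] at h
    exact h
  have hA2' : ∀ᵐ q ∂(μ.prod μ), g (q.1⁻¹ * q.2) = g q.2 := by
    rw [ae_iff]; exact hA2
  have hswap2 : ∀ᵐ x ∂μ, ∀ᵐ y ∂μ, g (y⁻¹ * x) = g x :=
    Measure.ae_ae_of_ae_prod ((Measure.measurePreserving_swap).quasiMeasurePreserving.ae hA2')
  have hslice2 : ∀ᵐ x ∂μ, Integrable (fun y => g (y⁻¹ * x)) μ :=
    (kernel_integrable μ μ hgTSM hgi).prod_left_ae
  have hconstint : ∀ x : G, ∫ y, g (y⁻¹ * x) ∂μ = ∫ z, g z ∂μ := by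
    intro x
    conv_rhs => rw [← map_inv_mul_aux μ x]
    rw [integral_map (measurable_inv.mul_const x).aemeasurable]
    rw [map_inv_mul_aux μ x]
    exact hgi.1
  refine ⟨∫ z, g z ∂μ, ?_⟩
  filter_upwards [hswap2, hslice2, hfg] with x hx _hxi hfx
  have hconst : ∫ y, g (y⁻¹ * x) ∂μ = g x := by
    rw [integral_congr_ae (show (fun y : G => g (y⁻¹ * x)) =ᵐ[μ] (fun _ => g x) from hx)]
    simp
  calc f x = g x := hfx
    _ = ∫ y, g (y⁻¹ * x) ∂μ := hconst.symm
    _ = ∫ z, g z ∂μ := hconstint x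
end

section
/- Let G be a locally compact group and σ ∈ M(G) with ‖σ‖ = 1. Then there is a contractive projection P: M(G) → M(G) whose range is the space H_σ(G) = {μ ∈ M(G) : σ*μ = μ} of σ-harmonic measures. -/
open MeasureTheory Filter Topology
open scoped ENNReal ZeroAtInfty
set_option linter.unusedSectionVars false

variable {G : Type*} [Group G] [TopologicalSpace G] [IsTopologicalGroup G]
  [LocallyCompactSpace G] [MeasurableSpace G] [BorelSpace G]

/-- Left translate of a `C₀`-function: `(lTrans x f)(y) = f (x * y)`. -/
noncomputable def lTrans (x : G) (f : C₀(G, ℂ)) : C₀(G, ℂ) where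
  toFun := fun y => f (x * y)
  continuous_toFun := f.continuous.comp (continuous_const.mul continuous_id)
  zero_at_infty' :=
    f.zero_at_infty'.comp (le_of_eq (Homeomorph.mulLeft x).map_cocompact)

/-- Convolution `σ * μ` of a complex measure `σ` (encoded by its total variation `τ` and
unimodular density `u`) with a functional `μ ∈ M(G) = C₀(G)*`, evaluated at `f ∈ C₀(G)`:
`⟨σ * μ, f⟩ = ∫ u(x) · μ(y ↦ f(x y)) dτ(x)`. -/
noncomputable def convAction (τ : Measure G) (u : G → ℂ)
    (μ : C₀(G, ℂ) →L[ℂ] ℂ) (f : C₀(G, ℂ)) : ℂ :=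
  ∫ x, u x * μ (lTrans x f) ∂τ

section Aux

open scoped Pointwise

lemma lTrans_apply (x : G) (f : C₀(G, ℂ)) (y : G) : lTrans x f y = f (x * y) := rfl

lemma C0_norm_le {f : C₀(G, ℂ)} {C : ℝ} (hC : 0 ≤ C) (h : ∀ y, ‖f y‖ ≤ C) : ‖f‖ ≤ C := by
  rw [← ZeroAtInftyContinuousMap.norm_toBCF_eq_norm]
  exact (BoundedContinuousFunction.norm_le hC).mpr h

lemma C0_norm_apply_le (f : C₀(G, ℂ)) (y : G) : ‖f y‖ ≤ ‖f‖ := by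
  rw [← ZeroAtInftyContinuousMap.norm_toBCF_eq_norm]
  exact BoundedContinuousFunction.norm_coe_le_norm f.toBCF y

lemma norm_lTrans_le (x : G) (f : C₀(G, ℂ)) : ‖lTrans x f‖ ≤ ‖f‖ :=
  C0_norm_le (norm_nonneg f) fun y => C0_norm_apply_le f (x * y)

lemma lTrans_add (x : G) (f g : C₀(G, ℂ)) :
    lTrans x (f + g) = lTrans x f + lTrans x g := by
  ext y; rfl

lemma lTrans_smul (x : G) (c : ℂ) (f : C₀(G, ℂ)) :
    lTrans x (c • f) = c • lTrans x f := by
  ext y; rfl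

/-! ### Ultrafilter limit machinery -/

/-- A fixed ultrafilter extending `atTop` on `ℕ`. -/
noncomputable def natU : Ultrafilter ℕ := Ultrafilter.of atTop

lemma natU_le_atTop : (natU : Filter ℕ) ≤ atTop := Ultrafilter.of_le _

/-- Generalized limit along `natU`. -/
noncomputable def Ulim (a : ℕ → ℂ) : ℂ := limUnder (natU : Filter ℕ) a

lemma Ulim_spec {a : ℕ → ℂ} {C : ℝ} (h : ∀ n, ‖a n‖ ≤ C) :
    Tendsto a (natU : Filter ℕ) (𝓝 (Ulim a)) := by
  have hmem : Metric.closedBall (0 : ℂ) C ∈ (natU.map a : Filter ℂ) := by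
    refine mem_map.mpr (mem_of_superset univ_mem ?_)
    intro n _
    simpa [Metric.mem_closedBall, dist_zero_right] using h n
  obtain ⟨c, -, hc⟩ := (isCompact_closedBall (0 : ℂ) C).ultrafilter_le_nhds
    (natU.map a) (le_principal_iff.mpr hmem)
  exact le_nhds_lim ⟨c, hc⟩

lemma Ulim_eq {a : ℕ → ℂ} {c : ℂ} {C : ℝ} (h : ∀ n, ‖a n‖ ≤ C)
    (hc : Tendsto a (natU : Filter ℕ) (𝓝 c)) : Ulim a = c :=
  tendsto_nhds_unique (Ulim_spec h) hc

/-! ### Cesàro averages -/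

/-- Cesàro average of a sequence. -/
noncomputable def ces (S : ℕ → ℂ) (n : ℕ) : ℂ :=
  (n : ℂ)⁻¹ * ∑ k ∈ Finset.range n, S k

lemma ces_bound {S : ℕ → ℂ} {C : ℝ} (hC : 0 ≤ C) (h : ∀ k, ‖S k‖ ≤ C) (n : ℕ) :
    ‖ces S n‖ ≤ C := by
  rcases Nat.eq_zero_or_pos n with rfl | hn
  · simp [ces, hC]
  · have hsum : ‖∑ k ∈ Finset.range n, S k‖ ≤ (n : ℝ) * C := by
      calc ‖∑ k ∈ Finset.range n, S k‖ ≤ ∑ k ∈ Finset.range n, ‖S k‖ := norm_sum_le _ _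
        _ ≤ (Finset.range n).card • C := Finset.sum_le_card_nsmul _ _ _ fun k _ => h k
        _ = (n : ℝ) * C := by simp [nsmul_eq_mul]
    have : ‖ces S n‖ = (n : ℝ)⁻¹ * ‖∑ k ∈ Finset.range n, S k‖ := by
      rw [ces, norm_mul, norm_inv, Complex.norm_natCast]
    rw [this]
    calc (n : ℝ)⁻¹ * ‖∑ k ∈ Finset.range n, S k‖ ≤ (n : ℝ)⁻¹ * ((n : ℝ) * C) := by
          gcongr
      _ = C := by
          field_simp
    
lemma ces_const {S : ℕ → ℂ} {c : ℂ} (h : ∀ k, S k = c) {n : ℕ} (hn : 1 ≤ n) :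
    ces S n = c := by
  have : ∑ k ∈ Finset.range n, S k = (n : ℂ) * c := by
    rw [Finset.sum_congr rfl fun k _ => h k, Finset.sum_const, Finset.card_range, nsmul_eq_mul]
  rw [ces, this, ← mul_assoc, inv_mul_cancel₀ (Nat.cast_ne_zero.mpr (by omega)), one_mul]

lemma ces_shift (S : ℕ → ℂ) (n : ℕ) :
    ces (fun k => S (k + 1)) n = ces S n + (n : ℂ)⁻¹ * (S n - S 0) := by
  have h1 : ∑ k ∈ Finset.range (n + 1), S k = (∑ k ∈ Finset.range n, S (k + 1)) + S 0 :=
    Finset.sum_range_succ' S n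
  have h2 : ∑ k ∈ Finset.range (n + 1), S k = (∑ k ∈ Finset.range n, S k) + S n :=
    Finset.sum_range_succ S n
  have : ∑ k ∈ Finset.range n, S (k + 1) = (∑ k ∈ Finset.range n, S k) + S n - S 0 := by
    rw [← h2, h1]; ring
  rw [ces, ces, this]; ring

lemma tendsto_err {S : ℕ → ℂ} {C : ℝ} (h : ∀ k, ‖S k‖ ≤ C) :
    Tendsto (fun n : ℕ => (n : ℂ)⁻¹ * (S n - S 0)) atTop (𝓝 0) := by
  have hb : ∀ n : ℕ, ‖(n : ℂ)⁻¹ * (S n - S 0)‖ ≤ (n : ℝ)⁻¹ * (2 * C) := by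
    intro n
    rw [norm_mul, norm_inv, Complex.norm_natCast]
    gcongr
    calc ‖S n - S 0‖ ≤ ‖S n‖ + ‖S 0‖ := norm_sub_le _ _
      _ ≤ 2 * C := by have := h n; have := h 0; linarith
  have hg : Tendsto (fun n : ℕ => (n : ℝ)⁻¹ * (2 * C)) atTop (𝓝 0) := by
    simpa using tendsto_inv_atTop_nhds_zero_nat.mul_const (2 * C)
  exact squeeze_zero_norm hb hg

end Aux

section Cont
open scoped Pointwise

set_option maxHeartbeats 2000000 in
lemma continuous_lTrans (f : C₀(G, ℂ)) : Continuous fun x : G => lTrans x f := by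
  rw [continuous_iff_continuousAt]
  intro x₀
  rw [ContinuousAt, Metric.tendsto_nhds]
  intro ε hε
  have hsmall : ∀ᶠ y in cocompact G, ‖f y‖ < ε / 3 := by
    have := Metric.tendsto_nhds.mp (f.zero_at_infty') (ε / 3) (by linarith)
    simpa [dist_zero_right] using this
  obtain ⟨K, hKc, hK⟩ := mem_cocompact.mp hsmall
  obtain ⟨V₀, hV₀c, hV₀⟩ := exists_compact_mem_nhds x₀
  have hCc : IsCompact (V₀⁻¹ * K) := hV₀c.inv.mul hKc
  have key : ∀ y : G, ∃ (V O : Set G), V ∈ 𝓝 x₀ ∧ O ∈ 𝓝 y ∧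
      ∀ x ∈ V, ∀ y' ∈ O, dist (f (x * y')) (f (x₀ * y)) < ε / 3 := by
    intro y
    have hc : ContinuousAt (fun p : G × G => f (p.1 * p.2)) (x₀, y) :=
      (f.continuous.comp continuous_mul).continuousAt
    have h3 := Metric.tendsto_nhds.mp hc (ε / 3) (by linarith)
    rw [nhds_prod_eq] at h3
    obtain ⟨V, hV, O, hO, hVO⟩ := mem_prod_iff.mp h3
    refine ⟨V, O, hV, hO, fun x hx y' hy' => ?_⟩
    have h4 := hVO (Set.mk_mem_prod hx hy')
    simpa using h4
  choose V O hV hO hVO using key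
  obtain ⟨t, -, htcov⟩ := hCc.elim_nhds_subcover O (fun y _ => hO y)
  have hVmem : (V₀ ∩ ⋂ y ∈ t, V y) ∈ 𝓝 x₀ :=
    inter_mem hV₀ ((biInter_mem t.finite_toSet).mpr fun y _ => hV y)
  refine eventually_of_mem hVmem fun x hx => ?_
  obtain ⟨hxV₀, hxV⟩ := hx
  rw [Set.mem_iInter₂] at hxV
  have hx₀V₀ : x₀ ∈ V₀ := mem_of_mem_nhds hV₀
  have hbound : ∀ y : G, ‖f (x * y) - f (x₀ * y)‖ ≤ 2 * (ε / 3) := by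
    intro y
    by_cases hyC : y ∈ V₀⁻¹ * K
    · obtain ⟨z, hzt, hyz⟩ := Set.mem_iUnion₂.mp (htcov hyC)
      have h1 : dist (f (x * y)) (f (x₀ * z)) < ε / 3 := hVO z x (hxV z hzt) y hyz
      have h2 : dist (f (x₀ * y)) (f (x₀ * z)) < ε / 3 :=
        hVO z x₀ (mem_of_mem_nhds (hV z)) y hyz
      calc ‖f (x * y) - f (x₀ * y)‖ = dist (f (x * y)) (f (x₀ * y)) := (dist_eq_norm _ _).symm
        _ ≤ dist (f (x * y)) (f (x₀ * z)) + dist (f (x₀ * y)) (f (x₀ * z)) :=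
            dist_triangle_right _ _ _
        _ ≤ 2 * (ε / 3) := by linarith
    · have hxyK : ∀ x' : G, x' ∈ V₀ → x' * y ∉ K := by
        intro x' hx' hmem
        refine hyC ?_
        have := Set.mul_mem_mul (Set.inv_mem_inv.mpr hx') hmem
        simpa [← mul_assoc] using this
      have h1 : ‖f (x * y)‖ < ε / 3 := hK (hxyK x hxV₀)
      have h2 : ‖f (x₀ * y)‖ < ε / 3 := hK (hxyK x₀ hx₀V₀)
      calc ‖f (x * y) - f (x₀ * y)‖ ≤ ‖f (x * y)‖ + ‖f (x₀ * y)‖ := norm_sub_le _ _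
        _ ≤ 2 * (ε / 3) := by linarith
  rw [dist_eq_norm]
  have hle : ‖lTrans x f - lTrans x₀ f‖ ≤ 2 * (ε / 3) := by
    refine C0_norm_le (by linarith) fun y => ?_
    simpa [lTrans_apply] using hbound y
  linarith

end Cont

section Greedy
open scoped Pointwise

/-- Evaluation at a point as an additive monoid hom on `C₀`. -/
noncomputable def evalHom (y : G) : C₀(G, ℂ) →+ ℂ where
  toFun := fun g => g y
  map_zero' := rfl
  map_add' := fun _ _ => rfl

set_option maxHeartbeats 1000000 in
/-- The set where a translate-functional is large is contained in a compact set. -/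
lemma exists_compact_large (ν : C₀(G, ℂ) →L[ℂ] ℂ) (f : C₀(G, ℂ)) {ε : ℝ} (hε : 0 < ε) :
    ∃ C : Set G, IsCompact C ∧ ∀ x : G, ε ≤ ‖ν (lTrans x f)‖ → x ∈ C := by
  classical
  set δ := ε / (2 * (‖ν‖ + 1)) with hδdef
  have hν0 : (0:ℝ) ≤ ‖ν‖ := norm_nonneg ν
  have hδpos : 0 < δ := by positivity
  have hsmall : ∀ᶠ y in cocompact G, ‖f y‖ < δ := by
    have := Metric.tendsto_nhds.mp (f.zero_at_infty') δ hδpos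
    simpa [dist_zero_right] using this
  obtain ⟨K₀, hK₀c, hK₀⟩ := mem_cocompact.mp hsmall
  set K : Set G := K₀ ∪ {1} with hKdef
  have hKc : IsCompact K := hK₀c.union isCompact_singleton
  have hKsmall : ∀ y, y ∉ K → ‖f y‖ ≤ δ := fun y hy =>
    le_of_lt (hK₀ fun h => hy (Or.inl h))
  have h1K : (1 : G) ∈ K := Or.inr rfl
  set B : Set G := K * K⁻¹ with hBdef
  have hBc : IsCompact B := hKc.mul hKc.inv
  have h1B : (1 : G) ∈ B := by
    have := Set.mul_mem_mul h1K (Set.inv_mem_inv.mpr h1K)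
    simpa using this
  have hBinv : ∀ g : G, g ∈ B → g⁻¹ ∈ B := by
    intro g hg
    obtain ⟨k, hk, y, hy, rfl⟩ := Set.mem_mul.mp hg
    have : y⁻¹ * k⁻¹ ∈ K * K⁻¹ :=
      Set.mul_mem_mul (Set.mem_inv.mp hy) (Set.inv_mem_inv.mpr hk)
    simpa [mul_inv_rev] using this
  have hmemBx : ∀ a b : G, a ∈ B * {b} ↔ a * b⁻¹ ∈ B := by
    intro a b
    rw [Set.mul_singleton]
    constructor
    · rintro ⟨c, hc, rfl⟩; simpa using hc
    · intro h; exact ⟨a * b⁻¹, h, by group⟩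
  have hBsymm : ∀ a b : G, a ∈ B * {b} → b ∈ B * {a} := by
    intro a b hab
    rw [hmemBx] at hab ⊢
    have := hBinv _ hab
    simpa using this
  by_cases hcov : ∃ s : Finset G, ∀ x : G, ε ≤ ‖ν (lTrans x f)‖ → x ∈ B * (s : Set G)
  · obtain ⟨s, hs⟩ := hcov
    exact ⟨B * (s : Set G), hBc.mul s.finite_toSet.isCompact, hs⟩
  exfalso
  push_neg at hcov
  have hselfB : ∀ x : G, x ∈ B * ({x} : Set G) := by
    intro x; rw [hmemBx]; simpa using h1B
  have grow : ∀ n : ℕ, ∃ s : Finset G, s.card = n ∧ (∀ x ∈ s, ε ≤ ‖ν (lTrans x f)‖) ∧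
      ∀ x ∈ s, ∀ x' ∈ s, x ≠ x' → x ∉ B * ({x'} : Set G) := by
    intro n
    induction n with
    | zero => exact ⟨∅, rfl, by simp, by simp⟩
    | succ m ih =>
      obtain ⟨s, hcard, hval, hsep⟩ := ih
      obtain ⟨x₀, hx₀val, hx₀⟩ := hcov s
      have hsubs : ∀ x' ∈ s, B * ({x'} : Set G) ⊆ B * (s : Set G) := fun x' hx' =>
        Set.mul_subset_mul_left (Set.singleton_subset_iff.mpr hx')
      have hx₀s : x₀ ∉ s := fun h => hx₀ (hsubs x₀ h (hselfB x₀))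
      refine ⟨insert x₀ s, by rw [Finset.card_insert_of_notMem hx₀s, hcard], ?_, ?_⟩
      · intro x hx
        rcases Finset.mem_insert.mp hx with rfl | hx
        · exact hx₀val
        · exact hval x hx
      · intro x hx x' hx' hne
        rcases Finset.mem_insert.mp hx with rfl | hxs
        · rcases Finset.mem_insert.mp hx' with h' | hx's
          · exact absurd h'.symm hne
          · exact fun hmem => hx₀ (hsubs x' hx's hmem)
        · rcases Finset.mem_insert.mp hx' with h' | hx's
          · subst h'
            exact fun hmem => hx₀ (hsubs x hxs (hBsymm _ _ hmem))
          · exact hsep x hxs x' hx's hne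
  obtain ⟨n, hn⟩ := exists_nat_gt (2 * (‖ν‖ * ‖f‖) / ε)
  obtain ⟨s, hcard, hval, hsep⟩ := grow (n + 1)
  set z : G → ℂ := fun x => ν (lTrans x f) with hzdef
  have hzne : ∀ x ∈ s, z x ≠ 0 := by
    intro x hx h0
    have h := hval x hx
    rw [show ν (lTrans x f) = z x from rfl, h0, norm_zero] at h
    linarith
  set c : G → ℂ := fun x => (‖z x‖ : ℂ) / z x with hcdef
  have hcnorm : ∀ x ∈ s, ‖c x‖ = 1 := by
    intro x hx
    rw [hcdef]
    simp only [norm_div, Complex.norm_real, norm_norm]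
    rw [div_self]
    simpa using hzne x hx
  have hcz : ∀ x ∈ s, c x * z x = (‖z x‖ : ℂ) := by
    intro x hx
    exact div_mul_cancel₀ _ (hzne x hx)
  set g : C₀(G, ℂ) := ∑ x ∈ s, c x • lTrans x f with hgdef
  have hνg : ν g = ((∑ x ∈ s, ‖z x‖ : ℝ) : ℂ) := by
    rw [hgdef, map_sum]
    rw [Complex.ofReal_sum]
    refine Finset.sum_congr rfl fun x hx => ?_
    rw [ContinuousLinearMap.map_smul, smul_eq_mul, ← hcz x hx]
  have huniq : ∀ y : G, ∀ x ∈ s, ∀ x' ∈ s, x * y ∈ K → x' * y ∈ K → x = x' := by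
    intro y x hx x' hx' hxy hx'y
    by_contra hne
    refine hsep x hx x' hx' hne ?_
    rw [hmemBx]
    have : (x * y) * (x' * y)⁻¹ ∈ K * K⁻¹ :=
      Set.mul_mem_mul hxy (Set.inv_mem_inv.mpr hx'y)
    simpa [mul_inv_rev, mul_assoc] using this
  have hgy : ∀ y : G, g y = ∑ x ∈ s, c x * f (x * y) := by
    intro y
    rw [hgdef]
    have := map_sum (evalHom y) (fun x => c x • lTrans x f) s
    simp only [evalHom, AddMonoidHom.coe_mk, ZeroHom.coe_mk] at this
    refine this.trans ?_
    rfl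
  have hbound : ∀ y : G, ‖g y‖ ≤ ‖f‖ + ((n : ℝ) + 1) * δ := by
    intro y
    rw [hgy y]
    have hterm : ∀ x ∈ s, ‖c x * f (x * y)‖ = ‖f (x * y)‖ := by
      intro x hx
      rw [norm_mul, hcnorm x hx, one_mul]
    have h1 : ‖∑ x ∈ s, c x * f (x * y)‖ ≤ ∑ x ∈ s, ‖f (x * y)‖ := by
      refine (norm_sum_le _ _).trans (le_of_eq ?_)
      exact Finset.sum_congr rfl hterm
    refine h1.trans ?_
    by_cases hex : ∃ x₀ ∈ s, x₀ * y ∈ K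
    · obtain ⟨x₀, hx₀s, hx₀K⟩ := hex
      rw [← Finset.add_sum_erase s _ hx₀s]
      have h2 : ∑ x ∈ s.erase x₀, ‖f (x * y)‖ ≤ ((n : ℝ) + 1) * δ := by
        have hle : ∀ x ∈ s.erase x₀, ‖f (x * y)‖ ≤ δ := by
          intro x hx
          have hxs := Finset.mem_of_mem_erase hx
          have hne := Finset.ne_of_mem_erase hx
          refine hKsmall _ fun hK' => hne (huniq y x hxs x₀ hx₀s hK' hx₀K)
        calc ∑ x ∈ s.erase x₀, ‖f (x * y)‖ ≤ (s.erase x₀).card • δ :=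
              Finset.sum_le_card_nsmul _ _ _ hle
          _ = ((s.erase x₀).card : ℝ) * δ := nsmul_eq_mul _ _
          _ ≤ ((n : ℝ) + 1) * δ := by
              have hc1 : (s.erase x₀).card ≤ n + 1 := hcard ▸ Finset.card_erase_le
              have hc2 : ((s.erase x₀).card : ℝ) ≤ (n : ℝ) + 1 := by exact_mod_cast hc1
              nlinarith
      have h3 : ‖f (x₀ * y)‖ ≤ ‖f‖ := C0_norm_apply_le f _
      linarith
    · push_neg at hex
      have hle : ∀ x ∈ s, ‖f (x * y)‖ ≤ δ := fun x hx => hKsmall _ (hex x hx)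
      calc ∑ x ∈ s, ‖f (x * y)‖ ≤ s.card • δ := Finset.sum_le_card_nsmul _ _ _ hle
        _ = ((n : ℝ) + 1) * δ := by rw [hcard]; push_cast [nsmul_eq_mul]; ring
        _ ≤ ‖f‖ + ((n : ℝ) + 1) * δ := le_add_of_nonneg_left (norm_nonneg f)
  have hgnorm : ‖g‖ ≤ ‖f‖ + ((n : ℝ) + 1) * δ := by
    refine C0_norm_le ?_ hbound
    positivity
  have hsum_lb : ((n : ℝ) + 1) * ε ≤ ∑ x ∈ s, ‖z x‖ := by
    have := Finset.card_nsmul_le_sum s (fun x => ‖z x‖) ε fun x hx => hval x hx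
    rw [hcard] at this
    calc ((n : ℝ) + 1) * ε = (n + 1 : ℕ) • ε := by push_cast [nsmul_eq_mul]; ring
      _ ≤ ∑ x ∈ s, ‖z x‖ := this
  have hνg_norm : ‖ν g‖ = ∑ x ∈ s, ‖z x‖ := by
    rw [hνg, Complex.norm_real]
    exact abs_of_nonneg (Finset.sum_nonneg fun x _ => norm_nonneg _)
  have hop : ‖ν g‖ ≤ ‖ν‖ * ‖g‖ := ν.le_opNorm g
  have hδν : ‖ν‖ * δ ≤ ε / 2 := by
    have hpos : (0:ℝ) < 2 * (‖ν‖ + 1) := by positivity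
    rw [hδdef, mul_comm, div_mul_eq_mul_div, div_le_iff₀ hpos]
    nlinarith
  have hfin : ((n : ℝ) + 1) * ε ≤ ‖ν‖ * ‖f‖ + ((n : ℝ) + 1) * (ε / 2) := by
    have h5 : ((n : ℝ) + 1) * ε ≤ ‖ν‖ * (‖f‖ + ((n : ℝ) + 1) * δ) := by
      calc ((n : ℝ) + 1) * ε ≤ ∑ x ∈ s, ‖z x‖ := hsum_lb
        _ = ‖ν g‖ := hνg_norm.symm
        _ ≤ ‖ν‖ * ‖g‖ := hop
        _ ≤ ‖ν‖ * (‖f‖ + ((n : ℝ) + 1) * δ) := by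
            exact mul_le_mul_of_nonneg_left hgnorm hν0
    have h6 : ‖ν‖ * (((n : ℝ) + 1) * δ) ≤ ((n : ℝ) + 1) * (ε / 2) := by
      have hn1 : (0:ℝ) ≤ (n : ℝ) + 1 := by positivity
      calc ‖ν‖ * (((n : ℝ) + 1) * δ) = ((n : ℝ) + 1) * (‖ν‖ * δ) := by ring
        _ ≤ ((n : ℝ) + 1) * (ε / 2) := mul_le_mul_of_nonneg_left hδν hn1
    nlinarith [h5, h6]
  have hn' : 2 * (‖ν‖ * ‖f‖) < (n : ℝ) * ε := by
    rw [div_lt_iff₀ hε] at hn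
    linarith
  nlinarith [hfin, hn', hε]

end Greedy

section Carrier
open scoped Pointwise
open TopologicalSpace

set_option maxHeartbeats 1000000 in
/-- There is a measurable, essentially σ-compact set `N` capturing all the compact mass of `τ`. -/
lemma exists_carrier (τ : Measure G) [IsFiniteMeasure τ] :
    ∃ N : Set G, MeasurableSet N ∧
      (∀ f : C₀(G, ℂ), IsSeparable ((fun x => lTrans x f) '' N)) ∧
      (∀ K : Set G, IsCompact K →
        ∃ U : Set G, MeasurableSet U ∧ K ⊆ U ∧ (τ.restrict Nᶜ) U = 0) := by
  classical
  obtain ⟨V, hVc, hVn⟩ := exists_compact_mem_nhds (1 : G)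
  have h1V : (1 : G) ∈ V := mem_of_mem_nhds hVn
  set W : Set G := V * V⁻¹ with hWdef
  have hWc : IsCompact W := hVc.mul hVc.inv
  have h1W : (1 : G) ∈ W := by
    have := Set.mul_mem_mul h1V (Set.inv_mem_inv.mpr h1V)
    simpa using this
  have hWn : W ∈ 𝓝 (1 : G) := by
    refine mem_of_superset hVn (Set.subset_mul_left V ?_)
    simpa using h1V
  have hWsymm : W⁻¹ = W := by
    rw [hWdef, mul_inv_rev, inv_inv]
  set H : Set G := ⋃ n : ℕ, W ^ (n + 1) with hHdef
  have hWpow : ∀ n : ℕ, IsCompact (W ^ (n + 1)) := by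
    intro n
    induction n with
    | zero => simpa [pow_one] using hWc
    | succ m ih => rw [pow_succ]; exact ih.mul hWc
  have hH1 : (1 : G) ∈ H := Set.mem_iUnion.mpr ⟨0, by simpa [pow_one] using h1W⟩
  have hHmul : ∀ a ∈ H, ∀ b ∈ H, a * b ∈ H := by
    intro a ha b hb
    obtain ⟨m, hm⟩ := Set.mem_iUnion.mp ha
    obtain ⟨k, hk⟩ := Set.mem_iUnion.mp hb
    refine Set.mem_iUnion.mpr ⟨m + k + 1, ?_⟩
    have hmem := Set.mul_mem_mul hm hk
    rw [← pow_add] at hmem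
    have hexp : m + 1 + (k + 1) = m + k + 1 + 1 := by omega
    rwa [hexp] at hmem
  have hHinv : ∀ a ∈ H, a⁻¹ ∈ H := by
    intro a ha
    obtain ⟨m, hm⟩ := Set.mem_iUnion.mp ha
    refine Set.mem_iUnion.mpr ⟨m, ?_⟩
    have : a⁻¹ ∈ (W ^ (m + 1))⁻¹ := Set.inv_mem_inv.mpr hm
    rwa [← inv_pow, hWsymm] at this
  have hHopen : IsOpen H := by
    have h1int : (1 : G) ∈ interior W := mem_interior_iff_mem_nhds.mpr hWn
    have hEq : H = ⋃ h ∈ H, h • interior W := by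
      apply Set.Subset.antisymm
      · intro a ha
        exact Set.mem_biUnion ha (Set.mem_smul_set.mpr ⟨1, h1int, mul_one a⟩)
      · intro a ha
        obtain ⟨h, hh, hah⟩ := Set.mem_iUnion₂.mp ha
        obtain ⟨w, hw, rfl⟩ := Set.mem_smul_set.mp hah
        have hwH : w ∈ H :=
          Set.mem_iUnion.mpr ⟨0, by simpa [pow_one] using interior_subset hw⟩
        exact hHmul h hh w hwH
    rw [hEq]
    exact isOpen_biUnion fun h _ => isOpen_interior.smul h
  have hCopen : ∀ g : G, IsOpen (H * ({g} : Set G)) := fun g => hHopen.mul_right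
  have hCself : ∀ g : G, g ∈ H * ({g} : Set G) := by
    intro g
    have := Set.mul_mem_mul hH1 (Set.mem_singleton g)
    simpa using this
  have hCeq : ∀ {g z : G}, z ∈ H * ({g} : Set G) → H * ({z} : Set G) = H * ({g} : Set G) := by
    intro g z hz
    rw [Set.mul_singleton] at hz
    obtain ⟨h, hh, rfl⟩ := hz
    ext a
    rw [Set.mul_singleton, Set.mul_singleton]
    constructor
    · rintro ⟨h', hh', rfl⟩
      exact ⟨h' * h, hHmul _ hh' _ hh, by group⟩
    · rintro ⟨h', hh', rfl⟩
      refine ⟨h' * h⁻¹, hHmul _ hh' _ (hHinv _ hh), by group⟩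
  have hCdisj : ∀ g g' : G, ¬Disjoint (H * ({g} : Set G)) (H * ({g'} : Set G)) →
      H * ({g} : Set G) = H * ({g'} : Set G) := by
    intro g g' hnd
    obtain ⟨z, hz1, hz2⟩ := Set.not_disjoint_iff.mp hnd
    rw [← hCeq hz1, hCeq hz2]
  set SS : Set (Set G) := Set.range (fun g : G => H * ({g} : Set G)) with hSSdef
  have hmble : ∀ S : ↑SS, MeasurableSet (S : Set G) := by
    rintro ⟨S, g, rfl⟩
    exact (hCopen g).measurableSet
  have hdisj : Pairwise (Function.onFun Disjoint fun S : ↑SS => (S : Set G)) := by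
    rintro ⟨S, g, rfl⟩ ⟨S', g', rfl⟩ hne
    by_contra hnd
    exact hne (Subtype.ext (hCdisj g g' hnd))
  have hcnt := MeasureTheory.Measure.countable_meas_pos_of_disjoint_iUnion
    (μ := τ) hmble hdisj
  set PP : Set (Set G) := {S | S ∈ SS ∧ 0 < τ S} with hPPdef
  have hPPcnt : PP.Countable := by
    have hEq : PP = Subtype.val '' {S : ↑SS | 0 < τ (S : Set G)} := by
      ext S
      constructor
      · rintro ⟨h1, h2⟩; exact ⟨⟨S, h1⟩, h2, rfl⟩
      · rintro ⟨⟨S', h1⟩, h2, rfl⟩; exact ⟨h1, h2⟩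
    rw [hEq]
    exact hcnt.image _
  have hPPopen : ∀ S ∈ PP, IsOpen S := by
    rintro S ⟨⟨g, rfl⟩, -⟩
    exact hCopen g
  refine ⟨⋃₀ PP, MeasurableSet.sUnion hPPcnt fun S hS => (hPPopen S hS).measurableSet, ?_, ?_⟩
  · -- separability
    intro f
    haveI := hPPcnt.to_subtype
    have hg : ∀ S : ↑PP, ∃ g : G, H * ({g} : Set G) = (S : Set G) := fun S => S.2.1
    choose gS hgS using hg
    have hNsub : ⋃₀ PP ⊆ ⋃ (S : ↑PP) (n : ℕ), W ^ (n + 1) * ({gS S} : Set G) := by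
      intro x hx
      obtain ⟨S, hS, hxS⟩ := hx
      have hxS' : x ∈ H * ({gS ⟨S, hS⟩} : Set G) := by
        rw [hgS ⟨S, hS⟩]; exact hxS
      rw [Set.mul_singleton] at hxS'
      obtain ⟨h, hh, rfl⟩ := hxS'
      obtain ⟨n, hn⟩ := Set.mem_iUnion.mp hh
      refine Set.mem_iUnion.mpr ⟨⟨S, hS⟩, Set.mem_iUnion.mpr ⟨n, ?_⟩⟩
      rw [Set.mul_singleton]
      exact ⟨h, hn, rfl⟩
    refine IsSeparable.mono ?_ (Set.image_mono hNsub)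
    rw [Set.image_iUnion]
    refine IsSeparable.iUnion fun S => ?_
    rw [Set.image_iUnion]
    refine IsSeparable.iUnion fun n => ?_
    exact (((hWpow n).mul isCompact_singleton).image (continuous_lTrans f)).isSeparable
  · -- compact null
    intro K hK
    have hcover : K ⊆ ⋃ g : G, H * ({g} : Set G) := fun x _ =>
      Set.mem_iUnion.mpr ⟨x, hCself x⟩
    obtain ⟨t, ht⟩ := hK.elim_finite_subcover (fun g : G => H * ({g} : Set G))
      (fun g => hCopen g) hcover
    refine ⟨⋃ g ∈ t, H * ({g} : Set G),
      (isOpen_biUnion fun g _ => hCopen g).measurableSet, ht, ?_⟩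
    have hzero : ∀ g : G, (τ.restrict (⋃₀ PP)ᶜ) (H * ({g} : Set G)) = 0 := by
      intro g
      by_cases h0 : 0 < τ (H * ({g} : Set G))
      · have hm : H * ({g} : Set G) ∈ PP := ⟨⟨g, rfl⟩, h0⟩
        have hsub : H * ({g} : Set G) ⊆ ⋃₀ PP := fun x hx => ⟨_, hm, hx⟩
        rw [Measure.restrict_apply (hCopen g).measurableSet]
        have hempty : (H * ({g} : Set G)) ∩ (⋃₀ PP)ᶜ = ∅ := by
          rw [Set.eq_empty_iff_forall_notMem]
          rintro x ⟨hx1, hx2⟩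
          exact hx2 (hsub hx1)
        rw [hempty, measure_empty]
      · have hτ0 : τ (H * ({g} : Set G)) = 0 := by
          simpa using not_lt.mp h0
        exact le_antisymm
          ((Measure.restrict_apply_le _ _).trans hτ0.le) zero_le
    refine le_antisymm ?_ zero_le
    calc (τ.restrict (⋃₀ PP)ᶜ) (⋃ g ∈ t, H * ({g} : Set G))
        ≤ ∑ g ∈ t, (τ.restrict (⋃₀ PP)ᶜ) (H * ({g} : Set G)) :=
          measure_biUnion_finset_le _ _
      _ = 0 := Finset.sum_eq_zero fun g _ => hzero g

end Carrier

section Repr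
open TopologicalSpace

variable {u : G → ℂ}

lemma integrable_conv (τ : Measure G) [IsFiniteMeasure τ] (hu : Measurable u)
    (hu1 : ∀ x, ‖u x‖ = 1) (ν : C₀(G, ℂ) →L[ℂ] ℂ) (f : C₀(G, ℂ)) :
    Integrable (fun x => u x * ν (lTrans x f)) τ := by
  have hmeas : AEStronglyMeasurable (fun x => u x * ν (lTrans x f)) τ :=
    hu.aestronglyMeasurable.mul
      ((ν.continuous.comp (continuous_lTrans f)).aestronglyMeasurable)
  refine ⟨hmeas, ?_⟩
  refine HasFiniteIntegral.of_bounded (C := ‖ν‖ * ‖f‖) (ae_of_all _ fun x => ?_)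
  rw [norm_mul, hu1, one_mul]
  exact (ν.le_opNorm _).trans
    (mul_le_mul_of_nonneg_left (norm_lTrans_le x f) (norm_nonneg ν))

set_option maxHeartbeats 1000000 in
/-- The convolution action is represented by a predual operator `R`:
`⟨σ * ν, f⟩ = ν (R f)` for all `ν`. -/
lemma exists_repr (τ : Measure G) [IsFiniteMeasure τ] (hu : Measurable u)
    (hu1 : ∀ x, ‖u x‖ = 1) :
    ∃ R : C₀(G, ℂ) → C₀(G, ℂ), ∀ (ν : C₀(G, ℂ) →L[ℂ] ℂ) (f : C₀(G, ℂ)),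
      convAction τ u ν f = ν (R f) := by
  obtain ⟨N, hN, hNsep, hNnull⟩ := exists_carrier τ
  letI : MeasurableSpace C₀(G, ℂ) := borel _
  haveI : BorelSpace C₀(G, ℂ) := ⟨rfl⟩
  have hInt : ∀ f : C₀(G, ℂ), Integrable (fun x => u x • lTrans x f) (τ.restrict N) := by
    intro f
    have hLmeas : Measurable (fun x : G => lTrans x f) := (continuous_lTrans f).measurable
    have hLN : StronglyMeasurable (N.indicator (fun x : G => lTrans x f)) := by
      rw [stronglyMeasurable_iff_measurable_separable]
      refine ⟨hLmeas.indicator hN, ?_⟩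
      refine IsSeparable.mono (((hNsep f).union
        ((Set.countable_singleton (0 : C₀(G, ℂ))).isSeparable))) ?_
      rintro y ⟨x, rfl⟩
      by_cases hx : x ∈ N
      · exact Or.inl ⟨x, hx, by rw [Set.indicator_of_mem hx]⟩
      · right
        rw [Set.indicator_of_notMem hx]
        rfl
    have hsm : StronglyMeasurable
        (fun x => u x • (N.indicator (fun x : G => lTrans x f) x)) :=
      hu.stronglyMeasurable.smul hLN
    have hae : (fun x => u x • (N.indicator (fun x : G => lTrans x f) x))
        =ᵐ[τ.restrict N] (fun x => u x • lTrans x f) := by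
      filter_upwards [ae_restrict_mem hN] with x hx
      rw [Set.indicator_of_mem hx]
    refine ⟨hsm.aestronglyMeasurable.congr hae, ?_⟩
    refine HasFiniteIntegral.of_bounded (C := ‖f‖) (ae_of_all _ fun x => ?_)
    refine C0_norm_le (norm_nonneg f) fun y => ?_
    have hy : (u x • lTrans x f) y = u x * f (x * y) := rfl
    rw [hy, norm_mul, hu1, one_mul]
    exact C0_norm_apply_le f (x * y)
  refine ⟨fun f => ∫ x, u x • lTrans x f ∂(τ.restrict N), fun ν f => ?_⟩
  have hIτ : Integrable (fun x => u x * ν (lTrans x f)) τ := integrable_conv τ hu hu1 ν f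
  have hsplit : convAction τ u ν f
      = (∫ x, u x * ν (lTrans x f) ∂(τ.restrict N))
        + (∫ x, u x * ν (lTrans x f) ∂(τ.restrict Nᶜ)) := by
    rw [convAction, ← integral_add_measure hIτ.restrict hIτ.restrict,
      Measure.restrict_add_restrict_compl hN]
  have h1 : (∫ x, u x * ν (lTrans x f) ∂(τ.restrict N))
      = ν (∫ x, u x • lTrans x f ∂(τ.restrict N)) := by
    rw [← ContinuousLinearMap.integral_comp_comm ν (hInt f)]
    simp_rw [ContinuousLinearMap.map_smul, smul_eq_mul]
  have h2 : (∫ x, u x * ν (lTrans x f) ∂(τ.restrict Nᶜ)) = 0 := by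
    set θ := τ.restrict Nᶜ with hθdef
    have hIθ : Integrable (fun x => u x * ν (lTrans x f)) θ := hIτ.restrict
    set M := (τ Set.univ).toReal with hMdef
    have hM0 : 0 ≤ M := ENNReal.toReal_nonneg
    have key : ∀ ε : ℝ, 0 < ε → ‖∫ x, u x * ν (lTrans x f) ∂θ‖ ≤ ε * M := by
      intro ε hε
      obtain ⟨C, hCc, hC⟩ := exists_compact_large ν f hε
      obtain ⟨U, hU, hCU, hU0⟩ := hNnull C hCc
      have hsplitθ : (∫ x, u x * ν (lTrans x f) ∂θ)
          = (∫ x, u x * ν (lTrans x f) ∂(θ.restrict U))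
            + (∫ x, u x * ν (lTrans x f) ∂(θ.restrict Uᶜ)) := by
        rw [← integral_add_measure hIθ.restrict hIθ.restrict,
          Measure.restrict_add_restrict_compl hU]
      have hz : θ.restrict U = 0 := Measure.restrict_eq_zero.mpr hU0
      rw [hsplitθ, hz, integral_zero_measure, zero_add]
      have hbound : ∀ᵐ x ∂(θ.restrict Uᶜ), ‖u x * ν (lTrans x f)‖ ≤ ε := by
        filter_upwards [ae_restrict_mem hU.compl] with x hx
        rw [norm_mul, hu1, one_mul]
        by_contra hgt
        push_neg at hgt
        exact hx (hCU (hC x hgt.le))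
      calc ‖∫ x, u x * ν (lTrans x f) ∂(θ.restrict Uᶜ)‖
          ≤ ε * ((θ.restrict Uᶜ) Set.univ).toReal :=
            norm_integral_le_of_norm_le_const hbound
        _ ≤ ε * M := by
            refine mul_le_mul_of_nonneg_left ?_ hε.le
            refine ENNReal.toReal_mono (measure_ne_top τ _) ?_
            calc (θ.restrict Uᶜ) Set.univ ≤ θ Set.univ := Measure.restrict_apply_le _ _
              _ ≤ τ Set.univ := Measure.restrict_apply_le _ _
      
    by_contra hne
    have hpos : 0 < ‖∫ x, u x * ν (lTrans x f) ∂θ‖ := norm_pos_iff.mpr hne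
    have := key (‖∫ x, u x * ν (lTrans x f) ∂θ‖ / (2 * (M + 1))) (by positivity)
    have hlt : ‖∫ x, u x * ν (lTrans x f) ∂θ‖ / (2 * (M + 1)) * M
        < ‖∫ x, u x * ν (lTrans x f) ∂θ‖ := by
      rw [div_mul_eq_mul_div, div_lt_iff₀ (by positivity)]
      nlinarith
    linarith
  rw [hsplit, h1, h2, add_zero]

end Repr

section Assemble

lemma ces_add (S1 S2 : ℕ → ℂ) (n : ℕ) :
    ces (fun k => S1 k + S2 k) n = ces S1 n + ces S2 n := by
  simp only [ces, Finset.sum_add_distrib]; ring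

lemma ces_const_mul (c : ℂ) (S : ℕ → ℂ) (n : ℕ) :
    ces (fun k => c * S k) n = c * ces S n := by
  simp only [ces]
  rw [← Finset.mul_sum]
  ring

lemma Ulim_add {a b : ℕ → ℂ} {Ca Cb : ℝ} (ha : ∀ n, ‖a n‖ ≤ Ca) (hb : ∀ n, ‖b n‖ ≤ Cb) :
    Ulim (fun n => a n + b n) = Ulim a + Ulim b := by
  refine Ulim_eq (C := Ca + Cb) (fun n => (norm_add_le _ _).trans (add_le_add (ha n) (hb n))) ?_
  exact (Ulim_spec ha).add (Ulim_spec hb)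

lemma Ulim_const_mul (c : ℂ) {a : ℕ → ℂ} {Ca : ℝ} (ha : ∀ n, ‖a n‖ ≤ Ca) :
    Ulim (fun n => c * a n) = c * Ulim a := by
  refine Ulim_eq (C := ‖c‖ * Ca) (fun n => by
    rw [norm_mul]
    exact mul_le_mul_of_nonneg_left (ha n) (norm_nonneg c)) ?_
  exact (Ulim_spec ha).const_mul c

variable (τ : Measure G) (u : G → ℂ) [IsProbabilityMeasure τ]
  (hu : Measurable u) (hu1 : ∀ x, ‖u x‖ = 1)

/-- The convolution operator `T ν = σ * ν` on `M(G) = C₀(G)*`. -/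
noncomputable def Tact (ν : C₀(G, ℂ) →L[ℂ] ℂ) : C₀(G, ℂ) →L[ℂ] ℂ :=
  LinearMap.mkContinuous
    { toFun := fun f => convAction τ u ν f
      map_add' := fun f g => by
        simp only [convAction]
        simp_rw [lTrans_add, map_add, mul_add]
        exact integral_add (integrable_conv τ hu hu1 ν f) (integrable_conv τ hu hu1 ν g)
      map_smul' := fun c f => by
        simp only [convAction, RingHom.id_apply, smul_eq_mul]
        simp_rw [lTrans_smul, ContinuousLinearMap.map_smul, smul_eq_mul, mul_left_comm]
        exact integral_const_mul c _ }
    ‖ν‖ (fun f => by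
      have hb := norm_integral_le_of_norm_le_const (μ := τ) (C := ‖ν‖ * ‖f‖)
        (f := fun x => u x * ν (lTrans x f)) (ae_of_all _ fun x => by
          rw [norm_mul, hu1, one_mul]
          exact (ν.le_opNorm _).trans
            (mul_le_mul_of_nonneg_left (norm_lTrans_le x f) (norm_nonneg ν)))
      simpa [measure_univ, convAction] using hb)

lemma Tact_apply (ν : C₀(G, ℂ) →L[ℂ] ℂ) (f : C₀(G, ℂ)) :
    Tact τ u hu hu1 ν f = convAction τ u ν f := rfl

lemma Tact_norm_le (ν : C₀(G, ℂ) →L[ℂ] ℂ) : ‖Tact τ u hu hu1 ν‖ ≤ ‖ν‖ :=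
  LinearMap.mkContinuous_norm_le _ (norm_nonneg ν) _

lemma Tact_add (μ ν : C₀(G, ℂ) →L[ℂ] ℂ) :
    Tact τ u hu hu1 (μ + ν) = Tact τ u hu hu1 μ + Tact τ u hu hu1 ν := by
  ext f
  rw [ContinuousLinearMap.add_apply, Tact_apply, Tact_apply, Tact_apply]
  simp only [convAction]
  simp_rw [ContinuousLinearMap.add_apply, mul_add]
  exact integral_add (integrable_conv τ hu hu1 μ f) (integrable_conv τ hu hu1 ν f)

lemma Tact_smul (c : ℂ) (μ : C₀(G, ℂ) →L[ℂ] ℂ) :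
    Tact τ u hu hu1 (c • μ) = c • Tact τ u hu hu1 μ := by
  ext f
  rw [ContinuousLinearMap.smul_apply, Tact_apply, Tact_apply]
  simp only [convAction]
  simp_rw [ContinuousLinearMap.smul_apply, smul_eq_mul, mul_left_comm]
  exact integral_const_mul c _

lemma Tact_iter_norm_le (k : ℕ) (μ : C₀(G, ℂ) →L[ℂ] ℂ) :
    ‖(Tact τ u hu hu1)^[k] μ‖ ≤ ‖μ‖ := by
  induction k with
  | zero => simp
  | succ m ih =>
    rw [Function.iterate_succ_apply']
    exact (Tact_norm_le τ u hu hu1 _).trans ih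

lemma Tact_iter_add (k : ℕ) (μ ν : C₀(G, ℂ) →L[ℂ] ℂ) :
    (Tact τ u hu hu1)^[k] (μ + ν) = (Tact τ u hu hu1)^[k] μ + (Tact τ u hu hu1)^[k] ν := by
  induction k with
  | zero => simp
  | succ m ih =>
    rw [Function.iterate_succ_apply', Function.iterate_succ_apply',
      Function.iterate_succ_apply', ih, Tact_add]

lemma Tact_iter_smul (k : ℕ) (c : ℂ) (μ : C₀(G, ℂ) →L[ℂ] ℂ) :
    (Tact τ u hu hu1)^[k] (c • μ) = c • (Tact τ u hu hu1)^[k] μ := by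
  induction k with
  | zero => simp
  | succ m ih =>
    rw [Function.iterate_succ_apply', Function.iterate_succ_apply', ih, Tact_smul]

lemma Pseq_bound (μ : C₀(G, ℂ) →L[ℂ] ℂ) (f : C₀(G, ℂ)) (n : ℕ) :
    ‖ces (fun k => ((Tact τ u hu hu1)^[k + 1] μ) f) n‖ ≤ ‖μ‖ * ‖f‖ := by
  refine ces_bound (mul_nonneg (norm_nonneg μ) (norm_nonneg f)) (fun k => ?_) n
  exact (ContinuousLinearMap.le_opNorm _ f).trans
    (mul_le_mul_of_nonneg_right (Tact_iter_norm_le τ u hu hu1 (k + 1) μ) (norm_nonneg f))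

/-- The ergodic projection: generalized limit of the Cesàro averages of the iterates. -/
noncomputable def Pproj (μ : C₀(G, ℂ) →L[ℂ] ℂ) : C₀(G, ℂ) →L[ℂ] ℂ :=
  LinearMap.mkContinuous
    { toFun := fun f => Ulim (ces (fun k => ((Tact τ u hu hu1)^[k + 1] μ) f))
      map_add' := fun f g => by
        have e1 : ces (fun k => ((Tact τ u hu hu1)^[k + 1] μ) (f + g))
            = fun n => ces (fun k => ((Tact τ u hu hu1)^[k + 1] μ) f) n
              + ces (fun k => ((Tact τ u hu hu1)^[k + 1] μ) g) n := by
          funext n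
          rw [← ces_add]
          congr 1
          funext k
          rw [map_add]
        rw [e1, Ulim_add (Pseq_bound τ u hu hu1 μ f) (Pseq_bound τ u hu hu1 μ g)]
      map_smul' := fun c f => by
        dsimp only [RingHom.id_apply]
        rw [smul_eq_mul]
        have e1 : ces (fun k => ((Tact τ u hu hu1)^[k + 1] μ) (c • f))
            = fun n => c * ces (fun k => ((Tact τ u hu hu1)^[k + 1] μ) f) n := by
          funext n
          rw [← ces_const_mul]
          congr 1
          funext k
          rw [ContinuousLinearMap.map_smul, smul_eq_mul]
        rw [e1, Ulim_const_mul c (Pseq_bound τ u hu hu1 μ f)] }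
    ‖μ‖ (fun f => by
      refine le_of_tendsto (Ulim_spec (Pseq_bound τ u hu hu1 μ f)).norm ?_
      exact Eventually.of_forall (Pseq_bound τ u hu hu1 μ f))

lemma Pproj_apply (μ : C₀(G, ℂ) →L[ℂ] ℂ) (f : C₀(G, ℂ)) :
    Pproj τ u hu hu1 μ f = Ulim (ces (fun k => ((Tact τ u hu hu1)^[k + 1] μ) f)) := rfl

lemma Pproj_norm_le (μ : C₀(G, ℂ) →L[ℂ] ℂ) : ‖Pproj τ u hu hu1 μ‖ ≤ ‖μ‖ :=
  LinearMap.mkContinuous_norm_le _ (norm_nonneg μ) _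

lemma Pproj_fixed (μ : C₀(G, ℂ) →L[ℂ] ℂ) (hμ : Tact τ u hu hu1 μ = μ) :
    Pproj τ u hu hu1 μ = μ := by
  ext f
  rw [Pproj_apply]
  have hiter : ∀ k : ℕ, (Tact τ u hu hu1)^[k + 1] μ = μ := fun k =>
    Function.iterate_fixed hμ (k + 1)
  have hconst : ∀ n : ℕ, 1 ≤ n → ces (fun k => ((Tact τ u hu hu1)^[k + 1] μ) f) n = μ f := by
    intro n hn
    exact ces_const (fun k => by rw [hiter k]) hn
  refine Ulim_eq (Pseq_bound τ u hu hu1 μ f) ?_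
  have hev : ∀ᶠ n in (natU : Filter ℕ),
      ces (fun k => ((Tact τ u hu hu1)^[k + 1] μ) f) n = μ f :=
    natU_le_atTop (eventually_atTop.mpr ⟨1, hconst⟩)
  exact Tendsto.congr' (Filter.EventuallyEq.symm hev) tendsto_const_nhds

lemma Pproj_harmonic (R : C₀(G, ℂ) → C₀(G, ℂ))
    (hR : ∀ (ν : C₀(G, ℂ) →L[ℂ] ℂ) (f : C₀(G, ℂ)), convAction τ u ν f = ν (R f))
    (μ : C₀(G, ℂ) →L[ℂ] ℂ) :
    Tact τ u hu hu1 (Pproj τ u hu hu1 μ) = Pproj τ u hu hu1 μ := by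
  ext f
  set b : ℕ → ℂ := fun k => ((Tact τ u hu hu1)^[k + 1] μ) f with hbdef
  have hbb : ∀ k, ‖b k‖ ≤ ‖μ‖ * ‖f‖ := fun k =>
    (ContinuousLinearMap.le_opNorm _ f).trans
      (mul_le_mul_of_nonneg_right (Tact_iter_norm_le τ u hu hu1 (k + 1) μ) (norm_nonneg f))
  have hTP : Tact τ u hu hu1 (Pproj τ u hu hu1 μ) f = Pproj τ u hu hu1 μ (R f) := by
    rw [Tact_apply, hR]
  rw [hTP, Pproj_apply]
  have hshift : (fun k => ((Tact τ u hu hu1)^[k + 1] μ) (R f)) = fun k => b (k + 1) := by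
    funext k
    calc ((Tact τ u hu hu1)^[k + 1] μ) (R f)
        = convAction τ u ((Tact τ u hu hu1)^[k + 1] μ) f := (hR _ f).symm
      _ = Tact τ u hu hu1 ((Tact τ u hu hu1)^[k + 1] μ) f := rfl
      _ = b (k + 1) := by
          show _ = ((Tact τ u hu hu1)^[k + 1 + 1] μ) f
          simp only [Function.iterate_succ_apply']
  rw [hshift]
  have hces : ∀ n, ces (fun k => b (k + 1)) n = ces b n + (n : ℂ)⁻¹ * (b n - b 0) :=
    ces_shift b
  have htends : Tendsto (ces (fun k => b (k + 1))) (natU : Filter ℕ)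
      (𝓝 (Ulim (ces b) + 0)) := by
    have h1 : Tendsto (ces b) (natU : Filter ℕ) (𝓝 (Ulim (ces b))) :=
      Ulim_spec (Pseq_bound τ u hu hu1 μ f)
    have h2 : Tendsto (fun n : ℕ => (n : ℂ)⁻¹ * (b n - b 0)) (natU : Filter ℕ) (𝓝 0) :=
      (tendsto_err hbb).mono_left natU_le_atTop
    have := h1.add h2
    refine this.congr fun n => (hces n).symm
  have hbnd : ∀ n, ‖ces (fun k => b (k + 1)) n‖ ≤ ‖μ‖ * ‖f‖ := by
    refine ces_bound (mul_nonneg (norm_nonneg μ) (norm_nonneg f)) (fun k => hbb (k + 1))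
  rw [Ulim_eq hbnd htends, add_zero]
  rfl

lemma Pproj_add (μ ν : C₀(G, ℂ) →L[ℂ] ℂ) :
    Pproj τ u hu hu1 (μ + ν) = Pproj τ u hu hu1 μ + Pproj τ u hu hu1 ν := by
  ext f
  simp only [ContinuousLinearMap.add_apply, Pproj_apply]
  have e1 : ces (fun k => ((Tact τ u hu hu1)^[k + 1] (μ + ν)) f)
      = fun n => ces (fun k => ((Tact τ u hu hu1)^[k + 1] μ) f) n
        + ces (fun k => ((Tact τ u hu hu1)^[k + 1] ν) f) n := by
    funext n
    rw [← ces_add]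
    congr 1
    funext k
    rw [Tact_iter_add, ContinuousLinearMap.add_apply]
  rw [e1, Ulim_add (Pseq_bound τ u hu hu1 μ f) (Pseq_bound τ u hu hu1 ν f)]

lemma Pproj_smul (c : ℂ) (μ : C₀(G, ℂ) →L[ℂ] ℂ) :
    Pproj τ u hu hu1 (c • μ) = c • Pproj τ u hu hu1 μ := by
  ext f
  simp only [ContinuousLinearMap.smul_apply, Pproj_apply, smul_eq_mul]
  have e1 : ces (fun k => ((Tact τ u hu hu1)^[k + 1] (c • μ)) f)
      = fun n => c * ces (fun k => ((Tact τ u hu hu1)^[k + 1] μ) f) n := by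
    funext n
    rw [← ces_const_mul]
    congr 1
    funext k
    rw [Tact_iter_smul, ContinuousLinearMap.smul_apply, smul_eq_mul]
  rw [e1, Ulim_const_mul c (Pseq_bound τ u hu hu1 μ f)]

end Assemble

/-- Let `G` be a locally compact group and `σ ∈ M(G)` with `‖σ‖ = 1`, encoded
by its polar decomposition `(τ, u)` with `τ(G) = 1`.  Identifying `M(G)` with `C₀(G)*` via the
Riesz representation theorem, there is a contractive projection `P : M(G) → M(G)` whose range
is the space `H_σ(G) = {μ ∈ M(G) : σ * μ = μ}` of `σ`-harmonic measures. -/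
theorem contractive_projection_onto_harmonic_measures
    (τ : Measure G) (u : G → ℂ) (hu : Measurable u) (hu1 : ∀ x, ‖u x‖ = 1)
    (hτ : τ Set.univ = 1) :
    ∃ P : (C₀(G, ℂ) →L[ℂ] ℂ) →ₗ[ℂ] (C₀(G, ℂ) →L[ℂ] ℂ),
      (∀ μ, ‖P μ‖ ≤ ‖μ‖) ∧ (∀ μ, P (P μ) = P μ) ∧
      Set.range P = {μ : C₀(G, ℂ) →L[ℂ] ℂ | ∀ f, convAction τ u μ f = μ f} := by
  haveI : IsProbabilityMeasure τ := ⟨hτ⟩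
  obtain ⟨R, hR⟩ := exists_repr τ hu hu1
  have hfix : ∀ μ : C₀(G, ℂ) →L[ℂ] ℂ, (∀ f, convAction τ u μ f = μ f) →
      Tact τ u hu hu1 μ = μ := by
    intro μ hμ
    ext f
    rw [Tact_apply, hμ]
  have hharm : ∀ (μ : C₀(G, ℂ) →L[ℂ] ℂ) (f : C₀(G, ℂ)),
      convAction τ u (Pproj τ u hu hu1 μ) f = Pproj τ u hu hu1 μ f := by
    intro μ f
    rw [← Tact_apply τ u hu hu1, Pproj_harmonic τ u hu hu1 R hR μ]
  refine ⟨{ toFun := Pproj τ u hu hu1,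
            map_add' := Pproj_add τ u hu hu1,
            map_smul' := Pproj_smul τ u hu hu1 }, ?_, ?_, ?_⟩
  · exact Pproj_norm_le τ u hu hu1
  · intro μ
    simp only [LinearMap.coe_mk, AddHom.coe_mk]
    exact Pproj_fixed τ u hu hu1 _ (Pproj_harmonic τ u hu hu1 R hR μ)
  · ext μ
    simp only [Set.mem_range, Set.mem_setOf_eq, LinearMap.coe_mk, AddHom.coe_mk]
    constructor
    · rintro ⟨ν, rfl⟩
      exact hharm ν
    · intro hμ
      exact ⟨μ, Pproj_fixed τ u hu hu1 μ (hfix μ hμ)⟩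
end

section
/- Let G be a compact group and σ an adapted probability measure on G. Then the space of σ-harmonic measures is exactly ℂ·ω, the complex multiples of the normalized Haar measure: {μ ∈ M(G) : σ*μ = μ} = ℂ·ω. -/
open MeasureTheory Filter Topology Pointwise
open scoped ENNReal

open scoped NNReal

set_option linter.unusedSectionVars false
set_option maxHeartbeats 1000000

section Helpers

variable {G : Type*} [Group G] [TopologicalSpace G] [IsTopologicalGroup G]
  [CompactSpace G] [MeasurableSpace G] [BorelSpace G]

lemma hcs_aux {X : Type*} [TopologicalSpace X] [CompactSpace X]
    {E : Type*} [NormedAddCommGroup E] (f : X → E) :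
    HasCompactSupport f :=
  IsCompact.of_isClosed_subset isCompact_univ (isClosed_tsupport f) (Set.subset_univ _)

lemma integrable_of_bounded {E : Type*} [NormedAddCommGroup E] {τ : Measure G}
    [IsFiniteMeasure τ] {f : G → E}
    (hf : AEStronglyMeasurable f τ) {C : ℝ} (hC : ∀ x, ‖f x‖ ≤ C) : Integrable f τ :=
  ⟨hf, HasFiniteIntegral.of_bounded (C := C) (Eventually.of_forall hC)⟩

lemma cont_integrable {E : Type*} [NormedAddCommGroup E] [SecondCountableTopology E] {τ : Measure G}
    [IsFiniteMeasure τ] {f : G → E}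
    (hf : Continuous f) : Integrable f τ := by
  obtain ⟨C, hC⟩ := hf.bounded_above_of_compact_support (hcs_aux f)
  exact integrable_of_bounded hf.aestronglyMeasurable hC

lemma weight_mul_integrable {τ : Measure G} [IsFiniteMeasure τ] {w : G → ℂ}
    (hw : Measurable w) (hw1 : ∀ x, ‖w x‖ ≤ 1) {f : G → ℂ} (hf : Continuous f) :
    Integrable (fun b => w b * f b) τ := by
  obtain ⟨C, hC⟩ := hf.bounded_above_of_compact_support (hcs_aux f)
  refine integrable_of_bounded ((hw.mul hf.measurable).aestronglyMeasurable) (C := C) ?_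
  intro b
  calc ‖w b * f b‖ = ‖w b‖ * ‖f b‖ := norm_mul _ _
  _ ≤ 1 * C := mul_le_mul (hw1 b) (hC b) (norm_nonneg _) zero_le_one
  _ = C := one_mul C

/-- Plain Fubini swap for continuous integrands on a compact space. -/
lemma swap_cont (τ₁ τ₂ : Measure G) [IsFiniteMeasure τ₁] [IsFiniteMeasure τ₂]
    (Φ : G → G → ℂ) (hΦ : Continuous (Function.uncurry Φ)) :
    ∫ a, ∫ b, Φ a b ∂τ₂ ∂τ₁ = ∫ b, ∫ a, Φ a b ∂τ₁ ∂τ₂ :=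
  integral_integral_swap_of_hasCompactSupport hΦ (hcs_aux _)

/-- Continuity of a parametric integral with a bounded measurable weight. -/
lemma cont_param (τ : Measure G) [IsFiniteMeasure τ] (w : G → ℂ)
    (hw : Measurable w) (hw1 : ∀ x, ‖w x‖ ≤ 1)
    (Φ : G → G → ℂ) (hΦ : Continuous (Function.uncurry Φ)) :
    Continuous fun a => ∫ b, w b * Φ b a ∂τ := by
  rw [continuous_iff_continuousAt]
  intro a₀
  have key : Tendsto (fun a => ∫ b, w b * Φ b a ∂τ) (𝓝 a₀) (𝓝 (∫ b, w b * Φ b a₀ ∂τ)) := by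
    rw [Metric.tendsto_nhds]
    intro ε hε
    set T : ℝ := (τ Set.univ).toReal with hT
    have hT0 : 0 ≤ T := ENNReal.toReal_nonneg
    set δ : ℝ := ε / (T + 1) with hδ
    have hδ0 : 0 < δ := div_pos hε (by linarith)
    -- tube lemma
    have hUopen : IsOpen {p : G × G | ‖Φ p.1 p.2 - Φ p.1 a₀‖ < δ} := by
      have hcont : Continuous fun p : G × G => ‖Φ p.1 p.2 - Φ p.1 a₀‖ := by
        apply Continuous.norm
        exact (hΦ.comp (continuous_fst.prodMk continuous_snd)).sub
          (hΦ.comp (continuous_fst.prodMk continuous_const))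
      exact isOpen_lt hcont continuous_const
    have hsub : (Set.univ : Set G) ×ˢ ({a₀} : Set G) ⊆ {p : G × G | ‖Φ p.1 p.2 - Φ p.1 a₀‖ < δ} := by
      rintro ⟨b, a⟩ ⟨-, ha⟩
      simp only [Set.mem_singleton_iff] at ha
      subst ha
      simp [hδ0]
    obtain ⟨u, vs, huo, hvo, hsu, htv, huv⟩ :=
      generalized_tube_lemma isCompact_univ isCompact_singleton hUopen hsub
    have hvs : vs ∈ 𝓝 a₀ := hvo.mem_nhds (htv rfl)
    filter_upwards [hvs] with a ha
    have key : ∀ b, ‖Φ b a - Φ b a₀‖ ≤ δ := by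
      intro b
      have hmem : (b, a) ∈ u ×ˢ vs := Set.mk_mem_prod (hsu (Set.mem_univ b)) ha
      have h2 := huv hmem
      rw [Set.mem_setOf_eq] at h2
      exact h2.le
    have hconta : Continuous fun b => Φ b a :=
      hΦ.comp (continuous_id.prodMk continuous_const)
    have hconta₀ : Continuous fun b => Φ b a₀ :=
      hΦ.comp (continuous_id.prodMk continuous_const)
    have hint1 : Integrable (fun b => w b * Φ b a) τ := weight_mul_integrable hw hw1 hconta
    have hint0 : Integrable (fun b => w b * Φ b a₀) τ := weight_mul_integrable hw hw1 hconta₀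
    rw [dist_eq_norm, ← integral_sub hint1 hint0]
    have hbound : ∀ b, ‖w b * Φ b a - w b * Φ b a₀‖ ≤ δ := by
      intro b
      rw [← mul_sub, norm_mul]
      calc ‖w b‖ * ‖Φ b a - Φ b a₀‖ ≤ 1 * δ :=
        mul_le_mul (hw1 b) (key b) (norm_nonneg _) zero_le_one
      _ = δ := one_mul δ
    calc ‖∫ b, (w b * Φ b a - w b * Φ b a₀) ∂τ‖ ≤ δ * T :=
          norm_integral_le_of_norm_le_const (Eventually.of_forall hbound)
    _ < δ * (T + 1) := (mul_lt_mul_iff_right₀ hδ0).2 (by linarith)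
    _ = ε := by rw [hδ, div_mul_cancel₀ ε (by linarith : T + 1 ≠ 0)]
  exact key

/-- Swap with a `[0,1]`-valued measurable real density. -/
lemma swap_density (τ₁ τ₂ : Measure G) [IsFiniteMeasure τ₁] [IsFiniteMeasure τ₂]
    (r : G → ℝ) (hr : Measurable r) (hr0 : ∀ x, 0 ≤ r x) (hr1 : ∀ x, r x ≤ 1)
    (Φ : G → G → ℂ) (hΦ : Continuous (Function.uncurry Φ)) :
    ∫ b, (r b : ℂ) * (∫ a, Φ b a ∂τ₁) ∂τ₂ = ∫ a, ∫ b, (r b : ℂ) * Φ b a ∂τ₂ ∂τ₁ := by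
  set r' : G → ℝ≥0 := fun b => Real.toNNReal (r b) with hr'
  have hr'meas : Measurable r' := hr.real_toNNReal
  set τ' : Measure G := τ₂.withDensity (fun b => (r' b : ℝ≥0∞)) with hτ'
  have hfin : IsFiniteMeasure τ' := by
    apply isFiniteMeasure_withDensity
    have hle : ∫⁻ a, (r' a : ℝ≥0∞) ∂τ₂ ≤ τ₂ Set.univ := by
      have h1 : ∀ a, (r' a : ℝ≥0∞) ≤ 1 := by
        intro a
        rw [← ENNReal.coe_one]
        exact ENNReal.coe_le_coe.2 (Real.toNNReal_le_one.2 (hr1 a))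
      calc ∫⁻ a, (r' a : ℝ≥0∞) ∂τ₂ ≤ ∫⁻ _, 1 ∂τ₂ := lintegral_mono h1
      _ = τ₂ Set.univ := by simp
    exact ne_top_of_le_ne_top (measure_ne_top τ₂ _) hle
  have key : ∀ ψ : G → ℂ, ∫ b, ψ b ∂τ' = ∫ b, (r b : ℂ) * ψ b ∂τ₂ := by
    intro ψ
    rw [hτ', integral_withDensity_eq_integral_smul hr'meas]
    congr 1 with b
    rw [NNReal.smul_def, Complex.real_smul]
    congr 2
    exact Real.coe_toNNReal _ (hr0 b)
  have swap := swap_cont τ' τ₁ Φ hΦ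
  rw [← key]
  rw [swap]
  exact integral_congr_ae (Eventually.of_forall fun a => key _)

/-- Pointwise decomposition of multiplication by a complex weight. -/
lemma weight_decomp (z w : ℂ) :
    z * w = ((max z.re 0 : ℝ) : ℂ) * w - ((max (-z.re) 0 : ℝ) : ℂ) * w
      + Complex.I * (((max z.im 0 : ℝ) : ℂ) * w) - Complex.I * (((max (-z.im) 0 : ℝ) : ℂ) * w) := by
  have h1 : (max z.re 0 : ℝ) - max (-z.re) 0 = z.re := by
    rcases le_total 0 z.re with h | h
    · rw [max_eq_left h, max_eq_right (by linarith)]; ring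
    · rw [max_eq_right h, max_eq_left (by linarith)]; ring
  have h2 : (max z.im 0 : ℝ) - max (-z.im) 0 = z.im := by
    rcases le_total 0 z.im with h | h
    · rw [max_eq_left h, max_eq_right (by linarith)]; ring
    · rw [max_eq_right h, max_eq_left (by linarith)]; ring
  have hz : z = (z.re : ℂ) + z.im * Complex.I := (Complex.re_add_im z).symm
  calc z * w = (z.re : ℂ) * w + Complex.I * ((z.im : ℂ) * w) := by
        nth_rewrite 1 [hz]; ring
  _ = (((max z.re 0 : ℝ) : ℂ) - ((max (-z.re) 0 : ℝ) : ℂ)) * w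
        + Complex.I * ((((max z.im 0 : ℝ) : ℂ) - ((max (-z.im) 0 : ℝ) : ℂ)) * w) := by
      rw [← Complex.ofReal_sub, ← Complex.ofReal_sub, h1, h2]
  _ = _ := by ring

lemma max_abs_le {x : ℝ} (hx : |x| ≤ 1) : 0 ≤ max x 0 ∧ max x 0 ≤ 1 := by
  rw [abs_le] at hx
  exact ⟨le_max_right _ _, max_le hx.2 zero_le_one⟩

lemma norm_coe_max_le {x : ℝ} (hx : |x| ≤ 1) : ‖((max x 0 : ℝ) : ℂ)‖ ≤ 1 := by
  rw [Complex.norm_real, Real.norm_eq_abs, abs_of_nonneg (max_abs_le hx).1]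
  exact (max_abs_le hx).2

/-- Splitting a complex-weighted integral into four nonnegative-weighted pieces. -/
lemma combo_int (τ : Measure G) [IsFiniteMeasure τ]
    (v : G → ℂ) (hv : Measurable v) (hv1 : ∀ x, ‖v x‖ ≤ 1)
    (Ψ : G → ℂ) (hΨ : Continuous Ψ) :
    ∫ b, v b * Ψ b ∂τ
      = ∫ b, ((max (v b).re 0 : ℝ) : ℂ) * Ψ b ∂τ - ∫ b, ((max (-(v b).re) 0 : ℝ) : ℂ) * Ψ b ∂τ
        + Complex.I * ∫ b, ((max (v b).im 0 : ℝ) : ℂ) * Ψ b ∂τ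
        - Complex.I * ∫ b, ((max (-(v b).im) 0 : ℝ) : ℂ) * Ψ b ∂τ := by
  have habs : ∀ b, |(v b).re| ≤ 1 := fun b =>
    le_trans (Complex.abs_re_le_norm (v b)) (hv1 b)
  have habsi : ∀ b, |(v b).im| ≤ 1 := fun b =>
    le_trans (Complex.abs_im_le_norm (v b)) (hv1 b)
  have habs' : ∀ b, |(-(v b).re)| ≤ 1 := fun b => by rw [abs_neg]; exact habs b
  have habsi' : ∀ b, |(-(v b).im)| ≤ 1 := fun b => by rw [abs_neg]; exact habsi b
  have hmeas : Measurable fun b => (v b).re := Complex.measurable_re.comp hv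
  have hmeasi : Measurable fun b => (v b).im := Complex.measurable_im.comp hv
  have hI1 : Integrable (fun b => ((max (v b).re 0 : ℝ) : ℂ) * Ψ b) τ :=
    weight_mul_integrable (Complex.measurable_ofReal.comp (hmeas.max measurable_const))
      (fun b => norm_coe_max_le (habs b)) hΨ
  have hI2 : Integrable (fun b => ((max (-(v b).re) 0 : ℝ) : ℂ) * Ψ b) τ :=
    weight_mul_integrable (Complex.measurable_ofReal.comp (hmeas.neg.max measurable_const))
      (fun b => norm_coe_max_le (habs' b)) hΨ
  have hI3 : Integrable (fun b => ((max (v b).im 0 : ℝ) : ℂ) * Ψ b) τ :=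
    weight_mul_integrable (Complex.measurable_ofReal.comp (hmeasi.max measurable_const))
      (fun b => norm_coe_max_le (habsi b)) hΨ
  have hI4 : Integrable (fun b => ((max (-(v b).im) 0 : ℝ) : ℂ) * Ψ b) τ :=
    weight_mul_integrable (Complex.measurable_ofReal.comp (hmeasi.neg.max measurable_const))
      (fun b => norm_coe_max_le (habsi' b)) hΨ
  calc ∫ b, v b * Ψ b ∂τ
      = ∫ b, (((max (v b).re 0 : ℝ) : ℂ) * Ψ b - ((max (-(v b).re) 0 : ℝ) : ℂ) * Ψ b
          + Complex.I * (((max (v b).im 0 : ℝ) : ℂ) * Ψ b)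
          - Complex.I * (((max (-(v b).im) 0 : ℝ) : ℂ) * Ψ b)) ∂τ :=
        integral_congr_ae (Eventually.of_forall fun b => weight_decomp (v b) (Ψ b))
  _ = _ := by
      have hI3' : Integrable (fun b => Complex.I * (((max (v b).im 0 : ℝ) : ℂ) * Ψ b)) τ :=
        hI3.const_mul Complex.I
      have hI4' : Integrable (fun b => Complex.I * (((max (-(v b).im) 0 : ℝ) : ℂ) * Ψ b)) τ :=
        hI4.const_mul Complex.I
      have hI12 : Integrable (fun b => ((max (v b).re 0 : ℝ) : ℂ) * Ψ b
          - ((max (-(v b).re) 0 : ℝ) : ℂ) * Ψ b) τ := hI1.sub hI2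
      have hI123 : Integrable (fun b => ((max (v b).re 0 : ℝ) : ℂ) * Ψ b
          - ((max (-(v b).re) 0 : ℝ) : ℂ) * Ψ b
          + Complex.I * (((max (v b).im 0 : ℝ) : ℂ) * Ψ b)) τ := hI12.add hI3'
      rw [integral_sub hI123 hI4', integral_add hI12 hI3', integral_sub hI1 hI2,
        integral_const_mul, integral_const_mul]

/-- The weighted Fubini swap. -/
lemma swap_weighted (τ₁ τ₂ : Measure G) [IsFiniteMeasure τ₁] [IsFiniteMeasure τ₂]
    (v : G → ℂ) (hv : Measurable v) (hv1 : ∀ x, ‖v x‖ ≤ 1)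
    (Φ : G → G → ℂ) (hΦ : Continuous (Function.uncurry Φ)) :
    ∫ b, v b * (∫ a, Φ b a ∂τ₁) ∂τ₂ = ∫ a, ∫ b, v b * Φ b a ∂τ₂ ∂τ₁ := by
  have habs : ∀ b, |(v b).re| ≤ 1 := fun b =>
    le_trans (Complex.abs_re_le_norm (v b)) (hv1 b)
  have habsi : ∀ b, |(v b).im| ≤ 1 := fun b =>
    le_trans (Complex.abs_im_le_norm (v b)) (hv1 b)
  have habs' : ∀ b, |(-(v b).re)| ≤ 1 := fun b => by rw [abs_neg]; exact habs b
  have habsi' : ∀ b, |(-(v b).im)| ≤ 1 := fun b => by rw [abs_neg]; exact habsi b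
  have hmeas : Measurable fun b => (v b).re := Complex.measurable_re.comp hv
  have hmeasi : Measurable fun b => (v b).im := Complex.measurable_im.comp hv
  have hΨcont : Continuous fun b => ∫ a, Φ b a ∂τ₁ := by
    have h := cont_param τ₁ (fun _ => (1:ℂ)) measurable_const (fun x => by simp)
      (fun a b => Φ b a) (hΦ.comp continuous_swap)
    simpa using h
  -- the four density swaps
  have s₁ : ∫ b, ((max (v b).re 0 : ℝ) : ℂ) * (∫ a, Φ b a ∂τ₁) ∂τ₂
      = ∫ a, ∫ b, ((max (v b).re 0 : ℝ) : ℂ) * Φ b a ∂τ₂ ∂τ₁ :=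
    swap_density τ₁ τ₂ (fun b => max (v b).re 0) (hmeas.max measurable_const)
      (fun b => (max_abs_le (habs b)).1) (fun b => (max_abs_le (habs b)).2) Φ hΦ
  have s₂ : ∫ b, ((max (-(v b).re) 0 : ℝ) : ℂ) * (∫ a, Φ b a ∂τ₁) ∂τ₂
      = ∫ a, ∫ b, ((max (-(v b).re) 0 : ℝ) : ℂ) * Φ b a ∂τ₂ ∂τ₁ :=
    swap_density τ₁ τ₂ (fun b => max (-(v b).re) 0) (hmeas.neg.max measurable_const)
      (fun b => (max_abs_le (habs' b)).1) (fun b => (max_abs_le (habs' b)).2) Φ hΦ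
  have s₃ : ∫ b, ((max (v b).im 0 : ℝ) : ℂ) * (∫ a, Φ b a ∂τ₁) ∂τ₂
      = ∫ a, ∫ b, ((max (v b).im 0 : ℝ) : ℂ) * Φ b a ∂τ₂ ∂τ₁ :=
    swap_density τ₁ τ₂ (fun b => max (v b).im 0) (hmeasi.max measurable_const)
      (fun b => (max_abs_le (habsi b)).1) (fun b => (max_abs_le (habsi b)).2) Φ hΦ
  have s₄ : ∫ b, ((max (-(v b).im) 0 : ℝ) : ℂ) * (∫ a, Φ b a ∂τ₁) ∂τ₂
      = ∫ a, ∫ b, ((max (-(v b).im) 0 : ℝ) : ℂ) * Φ b a ∂τ₂ ∂τ₁ :=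
    swap_density τ₁ τ₂ (fun b => max (-(v b).im) 0) (hmeasi.neg.max measurable_const)
      (fun b => (max_abs_le (habsi' b)).1) (fun b => (max_abs_le (habsi' b)).2) Φ hΦ
  -- continuity (hence integrability) of the four swapped inner integrals
  have c₁ : Continuous fun a => ∫ b, ((max (v b).re 0 : ℝ) : ℂ) * Φ b a ∂τ₂ :=
    cont_param τ₂ (fun b => ((max (v b).re 0 : ℝ) : ℂ))
      (Complex.measurable_ofReal.comp (hmeas.max measurable_const))
      (fun b => norm_coe_max_le (habs b)) Φ hΦ
  have c₂ : Continuous fun a => ∫ b, ((max (-(v b).re) 0 : ℝ) : ℂ) * Φ b a ∂τ₂ :=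
    cont_param τ₂ (fun b => ((max (-(v b).re) 0 : ℝ) : ℂ))
      (Complex.measurable_ofReal.comp (hmeas.neg.max measurable_const))
      (fun b => norm_coe_max_le (habs' b)) Φ hΦ
  have c₃ : Continuous fun a => ∫ b, ((max (v b).im 0 : ℝ) : ℂ) * Φ b a ∂τ₂ :=
    cont_param τ₂ (fun b => ((max (v b).im 0 : ℝ) : ℂ))
      (Complex.measurable_ofReal.comp (hmeasi.max measurable_const))
      (fun b => norm_coe_max_le (habsi b)) Φ hΦ
  have c₄ : Continuous fun a => ∫ b, ((max (-(v b).im) 0 : ℝ) : ℂ) * Φ b a ∂τ₂ :=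
    cont_param τ₂ (fun b => ((max (-(v b).im) 0 : ℝ) : ℂ))
      (Complex.measurable_ofReal.comp (hmeasi.neg.max measurable_const))
      (fun b => norm_coe_max_le (habsi' b)) Φ hΦ
  calc ∫ b, v b * (∫ a, Φ b a ∂τ₁) ∂τ₂
      = ∫ b, ((max (v b).re 0 : ℝ) : ℂ) * (∫ a, Φ b a ∂τ₁) ∂τ₂
        - ∫ b, ((max (-(v b).re) 0 : ℝ) : ℂ) * (∫ a, Φ b a ∂τ₁) ∂τ₂
        + Complex.I * ∫ b, ((max (v b).im 0 : ℝ) : ℂ) * (∫ a, Φ b a ∂τ₁) ∂τ₂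
        - Complex.I * ∫ b, ((max (-(v b).im) 0 : ℝ) : ℂ) * (∫ a, Φ b a ∂τ₁) ∂τ₂ :=
      combo_int τ₂ v hv hv1 (fun b => ∫ a, Φ b a ∂τ₁) hΨcont
  _ = (∫ a, ∫ b, ((max (v b).re 0 : ℝ) : ℂ) * Φ b a ∂τ₂ ∂τ₁)
        - (∫ a, ∫ b, ((max (-(v b).re) 0 : ℝ) : ℂ) * Φ b a ∂τ₂ ∂τ₁)
        + Complex.I * (∫ a, ∫ b, ((max (v b).im 0 : ℝ) : ℂ) * Φ b a ∂τ₂ ∂τ₁)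
        - Complex.I * (∫ a, ∫ b, ((max (-(v b).im) 0 : ℝ) : ℂ) * Φ b a ∂τ₂ ∂τ₁) := by
      rw [s₁, s₂, s₃, s₄]
  _ = ∫ a, (∫ b, ((max (v b).re 0 : ℝ) : ℂ) * Φ b a ∂τ₂
        - ∫ b, ((max (-(v b).re) 0 : ℝ) : ℂ) * Φ b a ∂τ₂
        + Complex.I * ∫ b, ((max (v b).im 0 : ℝ) : ℂ) * Φ b a ∂τ₂
        - Complex.I * ∫ b, ((max (-(v b).im) 0 : ℝ) : ℂ) * Φ b a ∂τ₂) ∂τ₁ := by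
      have j₁ := cont_integrable (τ := τ₁) c₁
      have j₂ := cont_integrable (τ := τ₁) c₂
      have j₃ := cont_integrable (τ := τ₁) c₃
      have j₄ := cont_integrable (τ := τ₁) c₄
      have j₃' : Integrable (fun a => Complex.I * ∫ b, ((max (v b).im 0 : ℝ) : ℂ) * Φ b a ∂τ₂) τ₁ :=
        j₃.const_mul Complex.I
      have j₄' : Integrable (fun a => Complex.I * ∫ b, ((max (-(v b).im) 0 : ℝ) : ℂ) * Φ b a ∂τ₂) τ₁ :=
        j₄.const_mul Complex.I
      have j₁₂ : Integrable (fun a => (∫ b, ((max (v b).re 0 : ℝ) : ℂ) * Φ b a ∂τ₂)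
          - ∫ b, ((max (-(v b).re) 0 : ℝ) : ℂ) * Φ b a ∂τ₂) τ₁ := j₁.sub j₂
      have j₁₂₃ : Integrable (fun a => (∫ b, ((max (v b).re 0 : ℝ) : ℂ) * Φ b a ∂τ₂)
          - (∫ b, ((max (-(v b).re) 0 : ℝ) : ℂ) * Φ b a ∂τ₂)
          + Complex.I * ∫ b, ((max (v b).im 0 : ℝ) : ℂ) * Φ b a ∂τ₂) τ₁ := j₁₂.add j₃'
      rw [integral_sub j₁₂₃ j₄', integral_add j₁₂ j₃', integral_sub j₁ j₂,
        integral_const_mul, integral_const_mul]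
  _ = ∫ a, ∫ b, v b * Φ b a ∂τ₂ ∂τ₁ := by
      refine integral_congr_ae (Eventually.of_forall fun a => ?_)
      exact (combo_int τ₂ v hv hv1 (fun b => Φ b a)
        (hΦ.comp (continuous_id.prodMk continuous_const))).symm

/-- In a compact group, arbitrarily large powers of any element come back near the identity. -/
lemma pow_near_one {t : G} {U : Set G} (hU : IsOpen U) (heU : (1 : G) ∈ U) (N : ℕ) :
    ∃ k, N + 1 ≤ k ∧ t ^ k ∈ U := by
  -- sets of high powers
  set P : ℕ → Set G := fun N => closure ((fun k : ℕ => t ^ k) '' Set.Ici (N + 1)) with hP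
  have hPne : ∀ n, (P n).Nonempty :=
    fun n => ⟨t ^ (n + 1), subset_closure ⟨n + 1, Set.mem_Ici.2 (le_refl _), rfl⟩⟩
  have hPanti : ∀ n, P (n + 1) ⊆ P n := by
    intro n
    apply closure_mono
    apply Set.image_mono
    intro k hk
    exact le_trans (Nat.succ_le_succ (Nat.le_succ n)) hk
  have hPclosed : ∀ n, IsClosed (P n) := fun n => isClosed_closure
  have hPcompact : IsCompact (P 0) :=
    IsCompact.of_isClosed_subset isCompact_univ (hPclosed 0) (Set.subset_univ _)
  obtain ⟨y, hy⟩ := IsCompact.nonempty_iInter_of_sequence_nonempty_isCompact_isClosed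
    P hPanti hPne hPcompact hPclosed
  have hymem : ∀ n, y ∈ P n := fun n => Set.mem_iInter.1 hy n
  -- find a neighborhood V of y with V⁻¹ * V ⊆ U
  have hcont : Continuous fun p : G × G => p.1⁻¹ * p.2 :=
    (continuous_fst.inv).mul continuous_snd
  have hWopen : IsOpen ((fun p : G × G => p.1⁻¹ * p.2) ⁻¹' U) := hU.preimage hcont
  have hyy : (y, y) ∈ (fun p : G × G => p.1⁻¹ * p.2) ⁻¹' U := by
    simp only [Set.mem_preimage, inv_mul_cancel]
    exact heU
  obtain ⟨u1, u2, hu1, hu2, hyu1, hyu2, huu⟩ := isOpen_prod_iff.1 hWopen y y hyy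
  set V : Set G := u1 ∩ u2 with hV
  have hVopen : IsOpen V := hu1.inter hu2
  have hyV : y ∈ V := ⟨hyu1, hyu2⟩
  -- pick two powers in V
  have hm : ∃ m, 1 ≤ m ∧ t ^ m ∈ V := by
    have := (mem_closure_iff.1 (hymem 0)) V hVopen hyV
    obtain ⟨x, hxV, ⟨m, hm1, rfl⟩⟩ := this
    exact ⟨m, by simpa using hm1, hxV⟩
  obtain ⟨m, hm1, hmV⟩ := hm
  have hn : ∃ n, m + N + 1 ≤ n ∧ t ^ n ∈ V := by
    have := (mem_closure_iff.1 (hymem (m + N))) V hVopen hyV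
    obtain ⟨x, hxV, ⟨n, hn1, rfl⟩⟩ := this
    exact ⟨n, by simpa using hn1, hxV⟩
  obtain ⟨n, hn1, hnV⟩ := hn
  refine ⟨n - m, ?_, ?_⟩
  · omega
  · have hsplit : t ^ n = t ^ m * t ^ (n - m) := by
      rw [← pow_add]
      congr 1
      omega
    have hmem : ((t ^ m, t ^ n) : G × G) ∈ u1 ×ˢ u2 :=
      Set.mk_mem_prod hmV.1 hnV.2
    have := huu hmem
    rw [Set.mem_preimage] at this
    have heq : (t ^ m)⁻¹ * t ^ n = t ^ (n - m) := by
      rw [hsplit, inv_mul_cancel_left]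
    rwa [heq] at this

/-- A closed subsemigroup of a compact group contains inverses. -/
lemma inv_mem_closed_subsemigroup {T : Set G} (hTc : IsClosed T)
    (hTm : ∀ a ∈ T, ∀ b ∈ T, a * b ∈ T) {t : G} (ht : t ∈ T) : t⁻¹ ∈ T := by
  have hpow : ∀ k, 1 ≤ k → t ^ k ∈ T := by
    intro k hk
    induction k with
    | zero => omega
    | succ n ih =>
      rcases Nat.eq_or_lt_of_le hk with h | h
      · rw [← h, pow_one]
        exact ht
      · have hn : 1 ≤ n := by omega
        rw [pow_succ]
        exact hTm _ (ih hn) _ ht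
  -- t⁻¹ is in the closure of the set of positive powers of t
  have : t⁻¹ ∈ closure {x : G | ∃ k, 1 ≤ k ∧ x = t ^ k} := by
    rw [mem_closure_iff]
    intro W hWopen hWmem
    -- translate W by t
    have htW : IsOpen ((fun x => t⁻¹ * x) ⁻¹' W) :=
      hWopen.preimage (continuous_const.mul continuous_id)
    have heW : (1 : G) ∈ (fun x => t⁻¹ * x) ⁻¹' W := by
      simpa using hWmem
    obtain ⟨k, hk2, hkW⟩ := pow_near_one htW heW 1
    rw [Set.mem_preimage] at hkW
    refine ⟨t⁻¹ * t ^ k, hkW, k - 1, by omega, ?_⟩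
    have : t ^ k = t * t ^ (k - 1) := by
      rw [← pow_succ']
      congr 1
      omega
    rw [this, inv_mul_cancel_left]
  have hsub : {x : G | ∃ k, 1 ≤ k ∧ x = t ^ k} ⊆ T := by
    rintro x ⟨k, hk, rfl⟩
    exact hpow k hk
  have := closure_mono hsub this
  rwa [hTc.closure_eq] at this

/-- The maximum principle: a continuous `σ`-harmonic real function on a compact group with
adapted `σ` is constant. -/
lemma harmonic_const (σ : Measure G) [IsProbabilityMeasure σ]
    (hadapted : closure (⋃ n : ℕ, (msupport σ ∪ (msupport σ)⁻¹) ^ (n + 1)) = Set.univ)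
    (u : G → ℝ) (hu : Continuous u)
    (hharm : ∀ g, u g = ∫ x, u (x⁻¹ * g) ∂σ) : ∀ g g', u g = u g' := by
  obtain ⟨g₀, -, hg₀⟩ := isCompact_univ.exists_isMaxOn Set.univ_nonempty hu.continuousOn
  have hmax : ∀ g, u g ≤ u g₀ := fun g => hg₀ (Set.mem_univ g)
  set E : Set G := {g | u g = u g₀} with hE
  have hEclosed : IsClosed E := isClosed_eq hu continuous_const
  have hg₀E : g₀ ∈ E := rfl
  have step : ∀ g ∈ E, ∀ s ∈ msupport σ, s⁻¹ * g ∈ E := by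
    intro g hg s hs
    set w : G → ℝ := fun x => u g₀ - u (x⁻¹ * g) with hw
    have hucomp : Continuous fun x : G => u (x⁻¹ * g) :=
      hu.comp (continuous_inv.mul continuous_const)
    have hwcont : Continuous w := continuous_const.sub hucomp
    have hw0 : ∀ x, 0 ≤ w x := fun x => sub_nonneg.2 (hmax _)
    have hint : ∫ x, w x ∂σ = 0 := by
      rw [integral_sub (integrable_const _) (cont_integrable hucomp), integral_const]
      have := (hharm g).symm
      rw [this]
      have hg' : u g = u g₀ := hg
      simp [hg']
    have hae : w =ᵐ[σ] 0 := (integral_eq_zero_iff_of_nonneg hw0 ⟨hwcont.aestronglyMeasurable,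
      ((integrable_const (u g₀)).sub (cont_integrable hucomp)).2⟩).1 hint
    have hnull : σ {x | w x ≠ 0} = 0 := by
      have := ae_iff.1 hae
      simpa using this
    by_contra hne
    have hopen : IsOpen {x | w x ≠ 0} := isOpen_compl_singleton.preimage hwcont
    have hsmem : s ∈ {x | w x ≠ 0} := by
      simp only [Set.mem_setOf_eq, hw]
      intro h0
      apply hne
      have : u (s⁻¹ * g) = u g₀ := by linarith [sub_eq_zero.1 h0]
      exact this
    exact hs _ hopen hsmem hnull
  set T : Set G := {x : G | ∀ g ∈ E, x * g ∈ E} with hT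
  have hTclosed : IsClosed T := by
    have : T = ⋂ g ∈ E, (fun x => x * g) ⁻¹' E := by
      ext x
      simp [hT, Set.mem_iInter]
    rw [this]
    exact isClosed_biInter fun g hg => hEclosed.preimage (continuous_id.mul continuous_const)
  have hTmul : ∀ a ∈ T, ∀ b ∈ T, a * b ∈ T := by
    intro a ha b hb g hg
    rw [mul_assoc]
    exact ha _ (hb _ hg)
  have hSinvT : (msupport σ)⁻¹ ⊆ T := by
    intro x hx
    intro g hg
    have hx' : x⁻¹ ∈ msupport σ := Set.mem_inv.1 hx
    have := step g hg x⁻¹ hx'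
    rwa [inv_inv] at this
  have hST : msupport σ ⊆ T := by
    intro s hs
    have h1 : s⁻¹ ∈ T := hSinvT (by rwa [Set.mem_inv, inv_inv])
    have h2 := inv_mem_closed_subsemigroup hTclosed hTmul h1
    rwa [inv_inv] at h2
  have hpows : ∀ n : ℕ, (msupport σ ∪ (msupport σ)⁻¹) ^ (n + 1) ⊆ T := by
    intro n
    induction n with
    | zero => rw [pow_one]; exact Set.union_subset hST hSinvT
    | succ n ih =>
      rw [pow_succ]
      rw [Set.mul_subset_iff]
      intro a ha b hb
      exact hTmul _ (ih ha) _ ((Set.union_subset hST hSinvT) hb)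
  have hTuniv : ∀ x : G, x ∈ T := by
    intro x
    have : x ∈ closure (⋃ n : ℕ, (msupport σ ∪ (msupport σ)⁻¹) ^ (n + 1)) := by
      rw [hadapted]; trivial
    exact (closure_minimal (Set.iUnion_subset hpows) hTclosed) this
  have hconst : ∀ g, u g = u g₀ := by
    intro g
    have := hTuniv (g * g₀⁻¹) g₀ hg₀E
    rwa [inv_mul_cancel_right] at this
  intro g g'
  rw [hconst g, hconst g']

/-- The core lemma: if the complex measure `v·ν` is `σ`-harmonic, then its convolution with any
continuous function is the constant `(∫ v dν)·(∫ φ dω)`. -/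
lemma core_harmonic (ω : Measure G) [ω.IsHaarMeasure] [IsProbabilityMeasure ω]
    (σ : Measure G) [IsProbabilityMeasure σ]
    (hadapted : closure (⋃ n : ℕ, (msupport σ ∪ (msupport σ)⁻¹) ^ (n + 1)) = Set.univ)
    (ν : Measure G) [IsFiniteMeasure ν]
    (v : G → ℂ) (hv : Measurable v) (hv1 : ∀ x, ‖v x‖ ≤ 1)
    (hharm : ∀ f : G → ℂ, Continuous f →
      ∫ y, v y * (∫ x, f (x * y) ∂σ) ∂ν = ∫ y, v y * f y ∂ν)
    (φ : G → ℂ) (hφ : Continuous φ) (g : G) :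
    ∫ y, v y * φ (y⁻¹ * g) ∂ν = (∫ y, v y ∂ν) * ∫ x, φ x ∂ω := by
  set h : G → ℂ := fun g' => ∫ y, v y * φ (y⁻¹ * g') ∂ν with hh
  have hmix : Continuous (Function.uncurry fun y g' : G => φ (y⁻¹ * g')) :=
    hφ.comp ((continuous_fst.inv).mul continuous_snd)
  have hcont : Continuous h := cont_param ν v hv hv1 (fun y g' => φ (y⁻¹ * g')) hmix
  have harm : ∀ g', h g' = ∫ x, h (x⁻¹ * g') ∂σ := by
    intro g'
    have h1 := hharm (fun z => φ (z⁻¹ * g')) (hφ.comp (continuous_inv.mul continuous_const))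
    have h2 : ∀ y x : G, φ ((x * y)⁻¹ * g') = φ (y⁻¹ * (x⁻¹ * g')) := by
      intro y x
      rw [mul_inv_rev, mul_assoc]
    simp_rw [h2] at h1
    have goal' : ∫ y, v y * φ (y⁻¹ * g') ∂ν
        = ∫ x, (∫ y, v y * φ (y⁻¹ * (x⁻¹ * g')) ∂ν) ∂σ := by
      rw [← h1]
      exact swap_weighted σ ν v hv hv1 (fun y x => φ (y⁻¹ * (x⁻¹ * g')))
        (hφ.comp ((continuous_fst.inv).mul ((continuous_snd.inv).mul continuous_const)))
    exact goal'
  have hσint : ∀ g', Integrable (fun x => h (x⁻¹ * g')) σ :=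
    fun g' => cont_integrable (hcont.comp (continuous_inv.mul continuous_const))
  have hRe : ∀ g', (fun g'' => (h g'').re) g' = ∫ x, (fun g'' => (h g'').re) (x⁻¹ * g') ∂σ := by
    intro g'
    simp only
    rw [harm g']
    exact (integral_re (hσint g')).symm
  have hIm : ∀ g', (fun g'' => (h g'').im) g' = ∫ x, (fun g'' => (h g'').im) (x⁻¹ * g') ∂σ := by
    intro g'
    simp only
    rw [harm g']
    exact (integral_im (hσint g')).symm
  have hReconst := harmonic_const σ hadapted (fun g'' => (h g'').re)
    (Complex.continuous_re.comp hcont) hRe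
  have hImconst := harmonic_const σ hadapted (fun g'' => (h g'').im)
    (Complex.continuous_im.comp hcont) hIm
  have hconst : ∀ g', h g' = h 1 := by
    intro g'
    exact Complex.ext (hReconst g' 1) (hImconst g' 1)
  have hval : h 1 = (∫ y, v y ∂ν) * ∫ x, φ x ∂ω := by
    have e1 : ∫ g', h g' ∂ω = h 1 := by
      rw [integral_congr_ae (Eventually.of_forall hconst)]
      simp
    have e2 : ∫ g', h g' ∂ω = ∫ y, v y * (∫ g', φ (y⁻¹ * g') ∂ω) ∂ν := by
      rw [hh]
      exact (swap_weighted ω ν v hv hv1 (fun y g' => φ (y⁻¹ * g')) hmix).symm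
    have e3 : ∀ y : G, ∫ g', φ (y⁻¹ * g') ∂ω = ∫ x, φ x ∂ω :=
      fun y => integral_mul_left_eq_self φ y⁻¹
    rw [← e1, e2, integral_congr_ae (Eventually.of_forall fun y => by rw [e3 y])]
    have := integral_smul_const (μ := ν) v (∫ x, φ x ∂ω)
    simpa [smul_eq_mul] using this
  rw [show ∫ y, v y * φ (y⁻¹ * g) ∂ν = h g from rfl, hconst g, hval]

/-- Normalized Haar measure on a compact group is inversion-invariant. -/
lemma haar_inv_invariant (ω : Measure G) [ω.IsHaarMeasure] [IsProbabilityMeasure ω]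
    (φ : G → ℂ) (hφ : Continuous φ) : ∫ z, φ z⁻¹ ∂ω = ∫ z, φ z ∂ω := by
  have hms : msupport ω = Set.univ := by
    ext x
    simp only [msupport, Set.mem_setOf_eq, Set.mem_univ, iff_true]
    intro U hU hxU
    exact hU.measure_ne_zero ω ⟨x, hxU⟩
  have hadapted : closure (⋃ n : ℕ, (msupport ω ∪ (msupport ω)⁻¹) ^ (n + 1)) = Set.univ := by
    rw [hms]
    have h1 : ((Set.univ : Set G) ∪ (Set.univ : Set G)⁻¹) = Set.univ := by simp
    rw [h1]
    have h2 : ∀ n : ℕ, (Set.univ : Set G) ^ (n + 1) = Set.univ :=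
      fun n => Set.univ_pow (Nat.succ_ne_zero n)
    simp only [h2, Set.iUnion_const, closure_univ]
  have hharm : ∀ f : G → ℂ, Continuous f →
      ∫ y, (fun _ : G => (1:ℂ)) y * (∫ x, f (x * y) ∂ω) ∂ω
        = ∫ y, (fun _ : G => (1:ℂ)) y * f y ∂ω := by
    intro f hf
    simp only [one_mul]
    rw [swap_cont ω ω (fun y x => f (x * y)) (hf.comp (continuous_snd.mul continuous_fst))]
    calc ∫ x, ∫ y, f (x * y) ∂ω ∂ω
        = ∫ _x, (∫ y, f y ∂ω) ∂ω :=
          integral_congr_ae (Eventually.of_forall fun x => integral_mul_left_eq_self f x)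
    _ = ∫ y, f y ∂ω := by simp
  have hcore := core_harmonic ω ω hadapted ω (fun _ => (1:ℂ)) measurable_const
    (fun x => by simp) hharm φ hφ 1
  simpa using hcore
end Helpers

/-- Let `G` be a compact group with normalized Haar measure `ω` and `σ` an
adapted probability measure on `G`.  A complex measure `μ ∈ M(G)` is encoded by its polar
decomposition: a finite positive measure `ν` and a measurable unimodular density `v`.  Then
`μ` is `σ`-harmonic (tested against continuous functions) if and only if `μ` is a complex
multiple of `ω`: `{μ ∈ M(G) : σ * μ = μ} = ℂ·ω`. -/
theorem harmonic_measures_eq_multiples_of_haar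
    {G : Type*} [Group G] [TopologicalSpace G] [IsTopologicalGroup G]
    [CompactSpace G] [MeasurableSpace G] [BorelSpace G]
    (ω : Measure G) [ω.IsHaarMeasure] [IsProbabilityMeasure ω]
    (σ : Measure G) [IsProbabilityMeasure σ]
    (hadapted : closure (⋃ n : ℕ, (msupport σ ∪ (msupport σ)⁻¹) ^ (n + 1)) = Set.univ)
    (ν : Measure G) [IsFiniteMeasure ν]
    (v : G → ℂ) (hv : Measurable v) (hv1 : ∀ x, ‖v x‖ = 1) :
    (∀ f : G → ℂ, Continuous f →
      ∫ y, v y * (∫ x, f (x * y) ∂σ) ∂ν = ∫ y, v y * f y ∂ν) ↔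
    (∃ c : ℂ, ∀ f : G → ℂ, Continuous f →
      ∫ y, v y * f y ∂ν = c * ∫ x, f x ∂ω) := by
  have hv1' : ∀ x, ‖v x‖ ≤ 1 := fun x => le_of_eq (hv1 x)
  constructor
  · intro hharm
    refine ⟨∫ y, v y ∂ν, ?_⟩
    intro f hf
    have hcore := core_harmonic ω σ hadapted ν v hv hv1' hharm
      (fun z => f z⁻¹) (hf.comp continuous_inv) 1
    have hL : ∫ y, v y * f ((y⁻¹ * 1)⁻¹) ∂ν = ∫ y, v y * f y ∂ν := by
      apply integral_congr_ae
      filter_upwards with y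
      rw [mul_one, inv_inv]
    rw [hL] at hcore
    rw [hcore]
    congr 1
    exact haar_inv_invariant ω f hf
  · rintro ⟨c, hc⟩ f hf
    have hFcont : Continuous fun y => ∫ x, f (x * y) ∂σ := by
      have h := cont_param σ (fun _ => (1:ℂ)) measurable_const (fun x => by simp)
        (fun x y => f (x * y)) (hf.comp (continuous_fst.mul continuous_snd))
      simpa using h
    rw [hc _ hFcont, hc f hf]
    congr 1
    rw [swap_cont ω σ (fun y x => f (x * y)) (hf.comp (continuous_snd.mul continuous_fst))]
    calc ∫ x, ∫ y, f (x * y) ∂ω ∂σ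
        = ∫ _x, (∫ z, f z ∂ω) ∂σ :=
          integral_congr_ae (Eventually.of_forall fun x => integral_mul_left_eq_self f x)
    _ = ∫ z, f z ∂ω := by simp
end
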